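/- arXiv:1609.00128 — 9 statements merged into one kernel-verified Lean document; each statement's English description precedes it below -/
import Mathlib

section
/- Let d₁, d₂ and λ be positive real constants and let g be a zero-free analytic function on the open half-plane {w ∈ ℂ : Re w > 0} satisfying log⁺|g(w)| ≤ d₁ + d₂|w|^λ there. Then for every α with 0 < α < π/2 there exists μ_α > 0 such that log⁺|1/g(w)| ≤ μ_α·|w|^{1+λ} for all w with |arg w| ≤ α and |w| sufficiently large. -/
/-!
The Cayley map `ζ ↦ (1 + ζ) / (1 - ζ)` carries the unit disc onto the right half-plane, and the
zero-free function `g ∘ cayley` has a holomorphic logarithm `F` on the disc. The hypothesis bounds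
`Re F = log |g ∘ cayley|` by `d₁ + d₂ (2 / (1 - |ζ|)) ^ λ`, so Borel–Carathéodory on the disc of
radius `1 - δ / 2` bounds `|F|`, hence `log |1 / g ∘ cayley| = -Re F`, by `O(δ ^ (-1 - λ))` on
`|ζ| ≤ 1 - δ`. A point `w` of modulus `r ≥ 1` with `|arg w| ≤ α` is the image of a point at
distance at least `cos α / (2 r)` from the unit circle, which gives the bound `O(r ^ (1 + λ))`.
-/

open Metric Complex Set

theorem norm_mul_cos_le_re_of_abs_arg_le {w : ℂ} {a : ℝ} (ha : a ≤ Real.pi)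
    (harg : |arg w| ≤ a) : ‖w‖ * Real.cos a ≤ w.re := by
  rw [← norm_mul_cos_arg w, ← Real.cos_abs (arg w)]
  gcongr
  exact Real.cos_le_cos_of_nonneg_of_le_pi (abs_nonneg _) ha harg

theorem norm_sub_one_div_add_one_le {w : ℂ} (hw : 0 < w.re) :
    ‖(w - 1) / (w + 1)‖ ≤ 1 - 2 * w.re / ‖w + 1‖ ^ 2 := by
  have hw1 : 0 < ‖w + 1‖ := (show 0 < (w + 1).re by simp; linarith).trans_le (re_le_norm _)
  have hdiff : ‖w + 1‖ ^ 2 - ‖w - 1‖ ^ 2 = 4 * w.re := by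
    simp only [Complex.sq_norm, normSq_apply, add_re, add_im, sub_re, sub_im, one_re, one_im]
    ring
  rw [le_sub_comm, norm_div, div_le_iff₀ (by positivity)]
  set t := ‖w - 1‖ / ‖w + 1‖
  have ht : ‖w - 1‖ = t * ‖w + 1‖ := (div_mul_cancel₀ _ hw1.ne').symm
  rw [ht] at hdiff
  nlinarith [mul_nonneg (sq_nonneg ‖w + 1‖) (sq_nonneg (1 - t))]

noncomputable def cayleyRightHalfPlane (ζ : ℂ) : ℂ := (1 + ζ) / (1 - ζ)

namespace cayleyRightHalfPlane

theorem one_sub_ne_zero {ζ : ℂ} (hζ : ‖ζ‖ < 1) : 1 - ζ ≠ 0 := by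
  rintro hζ1
  rw [← sub_eq_zero.mp hζ1, norm_one] at hζ
  exact lt_irrefl _ hζ

theorem re_pos {ζ : ℂ} (hζ : ‖ζ‖ < 1) : 0 < (cayleyRightHalfPlane ζ).re := by
  have hnum : (1 + ζ).re * (1 - ζ).re + (1 + ζ).im * (1 - ζ).im = 1 - ‖ζ‖ ^ 2 := by
    simp only [Complex.sq_norm, normSq_apply, add_re, add_im, sub_re, sub_im, one_re, one_im]
    ring
  rw [cayleyRightHalfPlane, div_re, ← add_div, hnum]
  exact div_pos (by nlinarith [norm_nonneg ζ]) (normSq_pos.mpr (one_sub_ne_zero hζ))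

theorem norm_le {ζ : ℂ} (hζ : ‖ζ‖ < 1) : ‖cayleyRightHalfPlane ζ‖ ≤ 2 / (1 - ‖ζ‖) := by
  rw [cayleyRightHalfPlane, norm_div]
  have hnum : ‖1 + ζ‖ ≤ 2 := (norm_add_le _ _).trans (by rw [norm_one]; linarith)
  have hden : 1 - ‖ζ‖ ≤ ‖1 - ζ‖ := by simpa using norm_sub_norm_le (1 : ℂ) ζ
  gcongr

theorem differentiableOn : DifferentiableOn ℂ cayleyRightHalfPlane (ball 0 1) :=
  fun _ hζ ↦ ((differentiableAt_const _).add differentiableAt_id).div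
    ((differentiableAt_const _).sub differentiableAt_id)
    (one_sub_ne_zero (mem_ball_zero_iff.mp hζ)) |>.differentiableWithinAt

theorem apply_sub_one_div_add_one {w : ℂ} (hw : w + 1 ≠ 0) :
    cayleyRightHalfPlane ((w - 1) / (w + 1)) = w := by
  rw [cayleyRightHalfPlane]
  field_simp
  ring

theorem exists_eq_of_norm_mul_le_re {w : ℂ} {c : ℝ}
    (hc : 0 < c) (hw : 1 ≤ ‖w‖) (hcw : ‖w‖ * c ≤ w.re) :
    ∃ ζ, cayleyRightHalfPlane ζ = w ∧ ‖ζ‖ ≤ 1 - c / (2 * ‖w‖) := by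
  have hre : 0 < w.re := by nlinarith
  have hw1 : 0 < ‖w + 1‖ := (show 0 < (w + 1).re by simp; linarith).trans_le (re_le_norm _)
  have hw2 : ‖w + 1‖ ≤ 2 * ‖w‖ := (norm_add_le _ _).trans (by rw [norm_one]; linarith)
  refine ⟨_, apply_sub_one_div_add_one (norm_pos_iff.mp hw1),
    (norm_sub_one_div_add_one_le hre).trans (sub_le_sub_left ?_ 1)⟩
  calc c / (2 * ‖w‖) = 2 * (‖w‖ * c) / (2 * ‖w‖) ^ 2 := by field_simp
    _ ≤ 2 * w.re / ‖w + 1‖ ^ 2 := by gcongr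

end cayleyRightHalfPlane

theorem exists_cexp_eq_of_ne_zero_on_ball {h : ℂ → ℂ} {c : ℂ} {r : ℝ}
    (hd : DifferentiableOn ℂ h (ball c r)) (hnz : ∀ z ∈ ball c r, h z ≠ 0) :
    ∃ F : ℂ → ℂ, DifferentiableOn ℂ F (ball c r) ∧ ∀ z ∈ ball c r, exp (F z) = h z := by
  have han := hd.analyticOnNhd isOpen_ball
  have hlogDeriv : DifferentiableOn ℂ (fun z ↦ deriv h z / h z) (ball c r) :=
    (han.deriv.div han hnz).differentiableOn
  obtain ⟨F, hFc, hF⟩ := hlogDeriv.isExactOn_ball.with_val_at c (log (h c))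
  refine ⟨F, fun z hz ↦ (hF z hz).differentiableAt.differentiableWithinAt, fun z hz ↦ ?_⟩
  have hc : c ∈ ball c r := mem_ball_self (pos_of_mem_ball hz)
  have hderiv : ∀ z ∈ ball c r, HasDerivAt (fun z ↦ h z * exp (-F z)) 0 z := by
    intro z hz
    refine ((han z hz).differentiableAt.hasDerivAt.mul (hF z hz).neg.cexp).congr_deriv ?_
    field_simp [hnz z hz]
    ring
  have hconst := isOpen_ball.is_const_of_deriv_eq_zero (convex_ball c r).isPreconnected
    (fun z hz ↦ (hderiv z hz).differentiableAt.differentiableWithinAt)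
    (fun z hz ↦ (hderiv z hz).deriv) hz hc
  rw [hFc, exp_neg, exp_neg, exp_log (hnz c hc), mul_inv_cancel₀ (hnz c hc),
    mul_inv_eq_one₀ (exp_ne_zero _)] at hconst
  exact hconst.symm

theorem exists_re_eq_log_norm_comp_cayleyRightHalfPlane {g : ℂ → ℂ}
    (hg : DifferentiableOn ℂ g {w | 0 < w.re}) (hzf : ∀ w : ℂ, 0 < w.re → g w ≠ 0) :
    ∃ F : ℂ → ℂ, DifferentiableOn ℂ F (ball 0 1) ∧
      ∀ ζ ∈ ball (0 : ℂ) 1, (F ζ).re = Real.log ‖g (cayleyRightHalfPlane ζ)‖ := by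
  have hmaps : MapsTo cayleyRightHalfPlane (ball 0 1) {w | 0 < w.re} :=
    fun ζ hζ ↦ cayleyRightHalfPlane.re_pos (mem_ball_zero_iff.mp hζ)
  obtain ⟨F, hF, hexp⟩ := exists_cexp_eq_of_ne_zero_on_ball
    (hg.comp cayleyRightHalfPlane.differentiableOn hmaps) fun ζ hζ ↦ hzf _ (hmaps hζ)
  refine ⟨F, hF, fun ζ hζ ↦ ?_⟩
  rw [← Real.log_exp (F ζ).re, ← norm_exp, hexp ζ hζ, Function.comp_apply]

theorem norm_le_of_re_le_on_ball {F : ℂ → ℂ} {M R δ : ℝ} (hM : 0 < M)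
    (hF : DifferentiableOn ℂ F (ball 0 R)) (hre : MapsTo F (ball 0 R) {z | z.re ≤ M})
    (hδ : 0 < δ) {ζ : ℂ} (hζ : ‖ζ‖ + δ ≤ R) :
    ‖F ζ‖ ≤ 2 * R * (M + ‖F 0‖) / δ := by
  have hζ0 := norm_nonneg ζ
  have hF0 := norm_nonneg (F 0)
  have hR : 0 ≤ R := by linarith
  calc ‖F ζ‖ ≤ 2 * M * ‖ζ‖ / (R - ‖ζ‖) + ‖F 0‖ * (R + ‖ζ‖) / (R - ‖ζ‖) :=
        borelCaratheodory hM hF hre (by linarith) (mem_ball_zero_iff.mpr (by linarith))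
    _ ≤ 2 * M * R / δ + ‖F 0‖ * (2 * R) / δ := by gcongr <;> nlinarith
    _ = 2 * R * (M + ‖F 0‖) / δ := by ring

theorem norm_le_of_re_le_add_mul_rpow {F : ℂ → ℂ} {d₁ d₂ lam δ : ℝ}
    (hF : DifferentiableOn ℂ F (ball 0 1)) (hd₁ : 0 < d₁) (hd₂ : 0 ≤ d₂) (hlam : 0 ≤ lam)
    (hre : ∀ ζ ∈ ball (0 : ℂ) 1, (F ζ).re ≤ d₁ + d₂ * (2 / (1 - ‖ζ‖)) ^ lam)
    (hδ : 0 < δ) {ζ : ℂ} (hζ : ‖ζ‖ ≤ 1 - δ) :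
    ‖F ζ‖ ≤ 4 / δ * (d₁ + ‖F 0‖ + d₂ * (4 / δ) ^ lam) := by
  have hball : ball (0 : ℂ) (1 - δ / 2) ⊆ ball 0 1 := ball_subset_ball (by linarith)
  have hreM : MapsTo F (ball 0 (1 - δ / 2)) {z | z.re ≤ d₁ + d₂ * (4 / δ) ^ lam} := by
    intro ξ hξ
    have hξ' : ‖ξ‖ < 1 - δ / 2 := mem_ball_zero_iff.mp hξ
    have hdist : 2 / (1 - ‖ξ‖) ≤ 4 / δ := by
      rw [div_le_div_iff₀ (by linarith) hδ]
      linarith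
    refine (hre ξ (hball hξ)).trans ?_
    gcongr _ + _ * ?_
    exact Real.rpow_le_rpow (div_nonneg zero_le_two (by linarith)) hdist hlam
  have := norm_le_of_re_le_on_ball (by positivity) (hF.mono hball) hreM (half_pos hδ)
    (ζ := ζ) (by linarith)
  calc ‖F ζ‖ ≤ 2 * (1 - δ / 2) * (d₁ + d₂ * (4 / δ) ^ lam + ‖F 0‖) / (δ / 2) := this
    _ ≤ 2 * 1 * (d₁ + d₂ * (4 / δ) ^ lam + ‖F 0‖) / (δ / 2) := by gcongr; linarith
    _ = 4 / δ * (d₁ + ‖F 0‖ + d₂ * (4 / δ) ^ lam) := by field_simp; ring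

theorem mul_add_mul_mul_rpow_le {K r A B lam : ℝ} (hK : 0 ≤ K) (hr : 1 ≤ r) (hA : 0 ≤ A)
    (hlam : 0 ≤ lam) :
    K * r * (A + B * (K * r) ^ lam) ≤ K * (A + B * K ^ lam) * r ^ (1 + lam) := by
  have hr0 : 0 ≤ r := by linarith
  have hrlam : 1 ≤ r ^ lam := Real.one_le_rpow hr hlam
  rw [Real.mul_rpow hK hr0, Real.rpow_add (by linarith), Real.rpow_one]
  have : 0 ≤ K * r * A := by positivity
  nlinarith

/-- Phragmén–Lindelöf type estimate: if `g` is zero-free and analytic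
on the open right half-plane with `log⁺|g(w)| ≤ d₁ + d₂|w|^λ` there, then for each
`0 < α < π/2` there is `μ_α > 0` with `log⁺|1/g(w)| ≤ μ_α |w|^{1+λ}` for all `w`
with `|arg w| ≤ α` of sufficiently large modulus. -/
theorem phragmen_lindelof_zero_free
    (d₁ d₂ lam : ℝ) (hd₁ : 0 < d₁) (hd₂ : 0 < d₂) (hlam : 0 < lam)
    (g : ℂ → ℂ)
    (hg : DifferentiableOn ℂ g {w : ℂ | 0 < w.re})
    (hzf : ∀ w : ℂ, 0 < w.re → g w ≠ 0)
    (hbd : ∀ w : ℂ, 0 < w.re →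
        max (Real.log (‖g w‖)) 0 ≤ d₁ + d₂ * ‖w‖ ^ lam) :
    ∀ a : ℝ, 0 < a → a < Real.pi / 2 →
      ∃ μ : ℝ, 0 < μ ∧ ∃ R : ℝ, 0 < R ∧ ∀ w : ℂ, |Complex.arg w| ≤ a →
        R ≤ ‖w‖ →
        max (Real.log (‖1 / g w‖)) 0 ≤ μ * ‖w‖ ^ (1 + lam) := by
  intro a ha ha'
  have hc : 0 < Real.cos a := Real.cos_pos_of_mem_Ioo ⟨by linarith, ha'⟩
  obtain ⟨F, hF, hFre⟩ := exists_re_eq_log_norm_comp_cayleyRightHalfPlane hg hzf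
  have hFle : ∀ ζ ∈ ball (0 : ℂ) 1, (F ζ).re ≤ d₁ + d₂ * (2 / (1 - ‖ζ‖)) ^ lam := by
    intro ζ hζ
    have hζ1 := mem_ball_zero_iff.mp hζ
    rw [hFre ζ hζ]
    refine (le_max_left _ 0).trans <| (hbd _ (cayleyRightHalfPlane.re_pos hζ1)).trans ?_
    gcongr
    exact cayleyRightHalfPlane.norm_le hζ1
  set K := 8 / Real.cos a
  refine ⟨K * (d₁ + ‖F 0‖ + d₂ * K ^ lam), by positivity, 1, one_pos, fun w harg hw ↦ ?_⟩
  obtain ⟨ζ, hζw, hζ⟩ := cayleyRightHalfPlane.exists_eq_of_norm_mul_le_re hc hw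
    (norm_mul_cos_le_re_of_abs_arg_le (by linarith [Real.pi_pos]) harg)
  have hδ : 0 < Real.cos a / (2 * ‖w‖) := by positivity
  have hKδ : 4 / (Real.cos a / (2 * ‖w‖)) = K * ‖w‖ := by simp only [K]; field_simp; ring
  have hlog : Real.log ‖1 / g w‖ = -(F ζ).re := by
    rw [one_div, norm_inv, Real.log_inv, ← hζw, hFre ζ (mem_ball_zero_iff.mpr (by linarith))]
  rw [hlog]
  calc max (-(F ζ).re) 0 ≤ ‖F ζ‖ :=
        max_le ((neg_le_abs _).trans (abs_re_le_norm _)) (norm_nonneg _)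
    _ ≤ K * ‖w‖ * (d₁ + ‖F 0‖ + d₂ * (K * ‖w‖) ^ lam) := by
        simpa only [hKδ] using norm_le_of_re_le_add_mul_rpow hF hd₁ hd₂.le hlam.le hFle hδ hζ
    _ ≤ _ := mul_add_mul_mul_rpow_le (by positivity) hw (by positivity) hlam.le
end

section
/- Let k ∈ ℕ and let a₀, …, a_{k−1}, d₀, d₁, ν₀, ν₁ all be rational at infinity. Then there exist functions b₀, …, b_k, each rational at infinity, with b_k = d₀(d₀−1)⋯(d₀−k+1), such that the following holds: for every domain U contained in an annulus Ω(r) on which a₀, …, a_{k−1}, d₀, d₁, ν₀, ν₁ and b₀, …, b_k are all analytic, and every pair of zero-free analytic functions p, q on U satisfying p′/p = d₀·(q′/q) + d₁ and q″ + ν₁q′ + ν₀q = 0 on U, one has L[p]/p = Σ_{j=0}^{k} b_j·(q′/q)^j on U, where L[p] = p^{(k)} + a_{k−1}p^{(k−1)} + ⋯ + a₀p. -/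
/-- A function is rational at infinity if it is analytic on some annulus
`Ω(r) = {z : r < |z|}` and has at most polynomial growth there
(equivalently, at most a pole at `∞`). -/
def RationalAtInfinity (a : ℂ → ℂ) : Prop :=
  ∃ r : ℝ, 0 < r ∧ AnalyticOnNhd ℂ a {z : ℂ | r < ‖z‖} ∧
    ∃ (n : ℕ) (C : ℝ), ∀ z : ℂ, r < ‖z‖ →
      ‖a z‖ ≤ C * ‖z‖ ^ n

/-!
Write `w = q'/q`. The equation `q'' + ν₁ q' + ν₀ q = 0` becomes the Riccati equation
`w' = -(w² + ν₁ w + ν₀)`, and the hypothesis on `p` says `p' = (d₀ w + d₁) p`. Hence, if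
`p⁽ᵐ⁾ = Pₘ(w) · p` for a polynomial `Pₘ` whose coefficients are functions of `z`, differentiating
gives `p⁽ᵐ⁺¹⁾ = Pₘ₊₁(w) · p` with `Pₘ₊₁ = Pₘᶜ + Pₘ · (d₀ X + d₁) - Pₘ' · (X² + ν₁ X + ν₀)`,
where `Pₘᶜ` is `Pₘ` with its coefficients differentiated. So the degree goes up by one and the top
coefficient gets multiplied by `d₀ - m`. The coefficients of `Pₘ` are built from `d₀, d₁, ν₀, ν₁`
by ring operations and differentiation, and functions rational at infinity are closed under both;
for derivatives this is the Cauchy estimate on discs of radius `|z|/2`.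
-/

open Filter Asymptotics Bornology Metric Polynomial

theorem eventually_cobounded_lt_norm {E : Type*} [SeminormedAddCommGroup E] (r : ℝ) :
    ∀ᶠ z in cobounded E, r < ‖z‖ :=
  tendsto_norm_cobounded_atTop.eventually_gt_atTop r

theorem rationalAtInfinity_iff {f : ℂ → ℂ} : RationalAtInfinity f ↔
    (∃ r, AnalyticOnNhd ℂ f {z | r < ‖z‖}) ∧ ∃ n : ℕ, f =O[cobounded ℂ] (· ^ n) := by
  constructor
  · rintro ⟨r, -, hf, n, C, hC⟩
    refine ⟨⟨r, hf⟩, n, .of_bound C ?_⟩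
    filter_upwards [eventually_cobounded_lt_norm r] with z hz
    simpa using hC z hz
  · rintro ⟨⟨r, hf⟩, n, hO⟩
    obtain ⟨C, hC⟩ := hO.bound
    obtain ⟨R, hR⟩ := hasBasis_cobounded_norm.eventually_iff.1 hC
    refine ⟨max (max r R) 1, by positivity, hf.mono fun z (hz : _ < ‖z‖) => ?_, n, C,
      fun z hz => ?_⟩
    · exact (le_max_left _ _).trans_lt ((le_max_left _ _).trans_lt hz)
    · simpa using hR.2 ((le_max_right _ _).trans ((le_max_left _ _).trans hz.le))

theorem isBigO_deriv_of_isBigO_pow {f : ℂ → ℂ} {r : ℝ} {n : ℕ}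
    (hf : DifferentiableOn ℂ f {z | r < ‖z‖}) (hO : f =O[cobounded ℂ] (· ^ n)) :
    deriv f =O[cobounded ℂ] (· ^ n) := by
  obtain ⟨C, hC, hCf⟩ := hO.exists_pos
  obtain ⟨R, -, hR⟩ := hasBasis_cobounded_norm.eventually_iff.1 hCf.bound
  refine .of_bound (2 * 2 ^ n * C) ?_
  filter_upwards [eventually_cobounded_lt_norm (2 * max r R), eventually_cobounded_lt_norm 1]
    with z hz hz₁
  have hball : closedBall z (‖z‖ / 2) ⊆ {w | max r R < ‖w‖} := fun w hw => by
    have := norm_sub_norm_le z w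
    rw [mem_closedBall, dist_eq_norm, norm_sub_rev] at hw
    show max r R < ‖w‖
    linarith
  have hsphere : ∀ w ∈ sphere z (‖z‖ / 2), ‖f w‖ ≤ C * (2 * ‖z‖) ^ n := fun w hw => by
    have hwR := hball (sphere_subset_closedBall hw)
    have hw2 : ‖w‖ ≤ 2 * ‖z‖ := by
      have := norm_le_norm_add_norm_sub' w z
      rw [mem_sphere, dist_eq_norm] at hw
      linarith
    calc ‖f w‖ ≤ C * ‖w ^ n‖ := hR (le_max_right r R |>.trans hwR.le)
      _ ≤ C * (2 * ‖z‖) ^ n := by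
        rw [norm_pow]; gcongr
  have hdiff : DiffContOnCl ℂ f (ball z (‖z‖ / 2)) :=
    (hf.mono fun w hw => (le_max_left r R).trans_lt (hball (closure_ball_subset_closedBall hw))
      ).diffContOnCl
  calc ‖deriv f z‖ ≤ C * (2 * ‖z‖) ^ n / (‖z‖ / 2) :=
        Complex.norm_deriv_le_of_forall_mem_sphere_norm_le (by linarith) hdiff hsphere
    _ = 2 * 2 ^ n * C * ‖z‖ ^ n / ‖z‖ := by field_simp; ring
    _ ≤ 2 * 2 ^ n * C * ‖z ^ n‖ := by
        rw [norm_pow]; exact div_le_self (by positivity) hz₁.le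

namespace RationalAtInfinity

variable {f g : ℂ → ℂ}

theorem const (c : ℂ) : RationalAtInfinity fun _ => c :=
  rationalAtInfinity_iff.2 ⟨⟨0, fun _ _ => analyticAt_const⟩, 0, by
    simpa using isBigO_const_const c (one_ne_zero (α := ℂ)) (cobounded ℂ)⟩

theorem add (hf : RationalAtInfinity f) (hg : RationalAtInfinity g) :
    RationalAtInfinity (f + g) := by
  obtain ⟨⟨r, hfr⟩, n, hfn⟩ := rationalAtInfinity_iff.1 hf
  obtain ⟨⟨s, hgs⟩, m, hgm⟩ := rationalAtInfinity_iff.1 hg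
  refine rationalAtInfinity_iff.2 ⟨⟨max r s, fun z (hz : _ < ‖z‖) => ?_⟩, max n m, ?_⟩
  · obtain ⟨hr, hs⟩ := max_lt_iff.1 hz
    exact (hfr z hr).add (hgs z hs)
  · exact (hfn.trans (isBigO_pow_pow_cobounded_of_le (le_max_left n m))).add
      (hgm.trans (isBigO_pow_pow_cobounded_of_le (le_max_right n m)))

theorem mul (hf : RationalAtInfinity f) (hg : RationalAtInfinity g) :
    RationalAtInfinity (f * g) := by
  obtain ⟨⟨r, hfr⟩, n, hfn⟩ := rationalAtInfinity_iff.1 hf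
  obtain ⟨⟨s, hgs⟩, m, hgm⟩ := rationalAtInfinity_iff.1 hg
  refine rationalAtInfinity_iff.2 ⟨⟨max r s, fun z (hz : _ < ‖z‖) => ?_⟩, n + m, ?_⟩
  · obtain ⟨hr, hs⟩ := max_lt_iff.1 hz
    exact (hfr z hr).mul (hgs z hs)
  · simp only [pow_add]
    exact hfn.mul hgm

protected theorem deriv (hf : RationalAtInfinity f) : RationalAtInfinity (deriv f) := by
  obtain ⟨⟨r, hfr⟩, n, hfn⟩ := rationalAtInfinity_iff.1 hf
  exact rationalAtInfinity_iff.2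
    ⟨⟨r, hfr.deriv⟩, n, isBigO_deriv_of_isBigO_pow hfr.differentiableOn hfn⟩

end RationalAtInfinity

def rationalAtInfinitySubalgebra : Subalgebra ℂ (ℂ → ℂ) where
  carrier := {f | RationalAtInfinity f}
  mul_mem' := .mul
  add_mem' := .add
  algebraMap_mem' := .const

def analyticOnNhdSubalgebra (U : Set ℂ) : Subalgebra ℂ (ℂ → ℂ) where
  carrier := {f | AnalyticOnNhd ℂ f U}
  mul_mem' := .mul
  add_mem' := .add
  algebraMap_mem' _ := analyticOnNhd_const

theorem Polynomial.mem_liftsRing_subtype_iff {R : Type*} [Ring R] {S : Subring R} {P : R[X]} :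
    P ∈ liftsRing S.subtype ↔ ∀ n, P.coeff n ∈ S := by
  simp [← lifts_iff_liftsRing, lifts_iff_coeff_lifts]

noncomputable def coeffwiseDeriv (P : (ℂ → ℂ)[X]) : (ℂ → ℂ)[X] :=
  ∑ i ∈ Finset.range (P.natDegree + 1), monomial i (deriv (P.coeff i))

theorem coeff_coeffwiseDeriv (P : (ℂ → ℂ)[X]) (n : ℕ) :
    (coeffwiseDeriv P).coeff n = deriv (P.coeff n) := by
  rw [coeffwiseDeriv, finsetSum_coeff]
  simp only [coeff_monomial, Finset.sum_ite_eq', Finset.mem_range]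
  split_ifs with h
  · rfl
  · rw [coeff_eq_zero_of_natDegree_lt (by omega)]
    exact (deriv_const' (0 : ℂ)).symm

theorem natDegree_coeffwiseDeriv_le (P : (ℂ → ℂ)[X]) :
    (coeffwiseDeriv P).natDegree ≤ P.natDegree :=
  natDegree_le_iff_coeff_eq_zero.2 fun n hn => by
    rw [coeff_coeffwiseDeriv, coeff_eq_zero_of_natDegree_lt hn]
    exact deriv_const' (0 : ℂ)

noncomputable def evalAt (z x : ℂ) : (ℂ → ℂ)[X] →+* ℂ :=
  eval₂RingHom (Pi.evalRingHom (fun _ : ℂ => ℂ) z) x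

@[simp] theorem evalAt_C (z x : ℂ) (f : ℂ → ℂ) : evalAt z x (C f) = f z := eval₂_C _ _

@[simp] theorem evalAt_X (z x : ℂ) : evalAt z x X = x := eval₂_X _ _

theorem evalAt_eq_sum_range' {P : (ℂ → ℂ)[X]} {N : ℕ} (hN : P.natDegree < N) (z x : ℂ) :
    evalAt z x P = ∑ i ∈ Finset.range N, P.coeff i z * x ^ i :=
  eval₂_eq_sum_range' _ hN x

theorem evalAt_derivative (P : (ℂ → ℂ)[X]) (z x : ℂ) :
    evalAt z x (derivative P) =
      ∑ i ∈ Finset.range (P.natDegree + 1), P.coeff i z * i * x ^ (i - 1) := by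
  rw [evalAt, coe_eval₂RingHom, ← eval_map, ← derivative_map, derivative_eval,
    sum_over_range' _ (by simp) _ (natDegree_map_le.trans_lt (Nat.lt_succ_self _))]
  simp [coeff_map]

theorem hasDerivAt_evalAt {P : (ℂ → ℂ)[X]} {w : ℂ → ℂ} {z w' : ℂ}
    (hP : ∀ n, DifferentiableAt ℂ (P.coeff n) z) (hw : HasDerivAt w w' z) :
    HasDerivAt (fun z => evalAt z (w z) P)
      (evalAt z (w z) (coeffwiseDeriv P) + evalAt z (w z) (derivative P) * w') z := by
  have hN := Nat.lt_succ_self P.natDegree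
  simp only [evalAt_eq_sum_range' hN, evalAt_derivative,
    evalAt_eq_sum_range' ((natDegree_coeffwiseDeriv_le P).trans_lt hN), coeff_coeffwiseDeriv,
    Finset.sum_mul, ← Finset.sum_add_distrib]
  refine HasDerivAt.fun_sum fun i _ => ?_
  exact ((hP i).hasDerivAt.fun_mul (hw.fun_pow i)).congr_deriv (by ring)

theorem hasDerivAt_logDeriv_of_ode {q : ℂ → ℂ} {z ν₀ ν₁ : ℂ} (hq : DifferentiableAt ℂ q z)
    (hq' : DifferentiableAt ℂ (deriv q) z) (hqz : q z ≠ 0)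
    (hode : iteratedDeriv 2 q z + ν₁ * deriv q z + ν₀ * q z = 0) :
    HasDerivAt (logDeriv q) (-(logDeriv q z ^ 2 + ν₁ * logDeriv q z + ν₀)) z := by
  rw [iteratedDeriv_succ, iteratedDeriv_one] at hode
  refine (hq'.hasDerivAt.div hq.hasDerivAt hqz).congr_deriv ?_
  rw [logDeriv_apply]
  field_simp
  linear_combination q z * hode

section DerivPoly

variable (d₀ d₁ ν₀ ν₁ : ℂ → ℂ)

noncomputable def derivStep (P : (ℂ → ℂ)[X]) : (ℂ → ℂ)[X] :=
  coeffwiseDeriv P + P * (C d₀ * X + C d₁) - derivative P * (X ^ 2 + C ν₁ * X + C ν₀)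

noncomputable def derivPoly : ℕ → (ℂ → ℂ)[X]
  | 0 => 1
  | m + 1 => derivStep d₀ d₁ ν₀ ν₁ (derivPoly m)

variable {d₀ d₁ ν₀ ν₁}

theorem coeff_derivStep_succ {P : (ℂ → ℂ)[X]} {i : ℕ} (hP : P.natDegree ≤ i) :
    (derivStep d₀ d₁ ν₀ ν₁ P).coeff (i + 1) = (d₀ - i) * P.coeff i := by
  have hc : P.coeff (i + 1) = 0 := coeff_eq_zero_of_natDegree_lt (by omega)
  rcases i with _ | i
  · have hP' : derivative P = 0 := by rw [eq_C_of_natDegree_le_zero hP, derivative_C]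
    simp [derivStep, coeff_coeffwiseDeriv, hP', hc, mul_add, ← mul_assoc, coeff_mul_X]
    ring
  · have hc2 : P.coeff (i + 1 + 2) = 0 := coeff_eq_zero_of_natDegree_lt (by omega)
    simp [derivStep, coeff_coeffwiseDeriv, coeff_derivative, hc, hc2, mul_add, sq, ← mul_assoc,
      coeff_mul_X, coeff_mul_C]
    ring

theorem natDegree_derivPoly_le (m : ℕ) : (derivPoly d₀ d₁ ν₀ ν₁ m).natDegree ≤ m := by
  induction m with
  | zero => simp [derivPoly]
  | succ m ih =>
    refine natDegree_le_iff_coeff_eq_zero.2 fun n hn => ?_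
    obtain ⟨i, rfl⟩ : ∃ i, n = i + 1 := ⟨n - 1, by omega⟩
    rw [derivPoly, coeff_derivStep_succ (ih.trans (by omega)),
      coeff_eq_zero_of_natDegree_lt (by omega), mul_zero]

theorem coeff_derivPoly_self (m : ℕ) :
    (derivPoly d₀ d₁ ν₀ ν₁ m).coeff m = ∏ j ∈ Finset.range m, (d₀ - j) := by
  induction m with
  | zero => simp [derivPoly]
  | succ m ih =>
    rw [derivPoly, coeff_derivStep_succ (natDegree_derivPoly_le m), ih, Finset.prod_range_succ,
      mul_comm]

variable {S : Subalgebra ℂ (ℂ → ℂ)} {w p : ℂ → ℂ}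

theorem derivPoly_mem_liftsRing (hS : ∀ f ∈ S, deriv f ∈ S) (hd₀ : d₀ ∈ S) (hd₁ : d₁ ∈ S)
    (hν₀ : ν₀ ∈ S) (hν₁ : ν₁ ∈ S) (m : ℕ) :
    derivPoly d₀ d₁ ν₀ ν₁ m ∈ liftsRing S.toSubring.subtype := by
  have hC : ∀ f ∈ S, C f ∈ liftsRing S.toSubring.subtype := fun f hf =>
    (lifts_iff_liftsRing _ _).1 (C_mem_lifts S.toSubring.subtype ⟨f, hf⟩)
  have hX : X ∈ liftsRing S.toSubring.subtype := (lifts_iff_liftsRing _ _).1 (X_mem_lifts _)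
  induction m with
  | zero => exact one_mem _
  | succ m ih =>
    have hP := mem_liftsRing_subtype_iff.1 ih
    have hD : coeffwiseDeriv (derivPoly d₀ d₁ ν₀ ν₁ m) ∈ liftsRing S.toSubring.subtype :=
      mem_liftsRing_subtype_iff.2 fun n => by
        rw [coeff_coeffwiseDeriv]; exact hS _ (hP n)
    have hD' : derivative (derivPoly d₀ d₁ ν₀ ν₁ m) ∈ liftsRing S.toSubring.subtype :=
      mem_liftsRing_subtype_iff.2 fun n => by
        rw [coeff_derivative]; exact mul_mem (hP _) (add_mem (natCast_mem _ _) (one_mem _))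
    rw [derivPoly, derivStep]
    exact sub_mem (add_mem hD (mul_mem ih (add_mem (mul_mem (hC _ hd₀) hX) (hC _ hd₁))))
      (mul_mem hD' (add_mem (add_mem (pow_mem hX 2) (mul_mem (hC _ hν₁) hX)) (hC _ hν₀)))

theorem hasDerivAt_evalAt_mul {P : (ℂ → ℂ)[X]} {z : ℂ}
    (hP : ∀ n, DifferentiableAt ℂ (P.coeff n) z)
    (hw : HasDerivAt w (-(w z ^ 2 + ν₁ z * w z + ν₀ z)) z)
    (hp : HasDerivAt p ((d₀ z * w z + d₁ z) * p z) z) :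
    HasDerivAt (fun z => evalAt z (w z) P * p z)
      (evalAt z (w z) (derivStep d₀ d₁ ν₀ ν₁ P) * p z) z :=
  ((hasDerivAt_evalAt hP hw).mul hp).congr_deriv (by simp [derivStep]; ring)

theorem iteratedDeriv_eq_evalAt_derivPoly_mul {U : Set ℂ} (hU : IsOpen U)
    (hd₀ : AnalyticOnNhd ℂ d₀ U) (hd₁ : AnalyticOnNhd ℂ d₁ U) (hν₀ : AnalyticOnNhd ℂ ν₀ U)
    (hν₁ : AnalyticOnNhd ℂ ν₁ U) (hw : ∀ z ∈ U, HasDerivAt w (-(w z ^ 2 + ν₁ z * w z + ν₀ z)) z)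
    (hp : ∀ z ∈ U, HasDerivAt p ((d₀ z * w z + d₁ z) * p z) z) (m : ℕ) :
    ∀ z ∈ U, iteratedDeriv m p z = evalAt z (w z) (derivPoly d₀ d₁ ν₀ ν₁ m) * p z := by
  induction m with
  | zero => simp [derivPoly]
  | succ m ih =>
    intro z hz
    have hcoeff n : DifferentiableAt ℂ ((derivPoly d₀ d₁ ν₀ ν₁ m).coeff n) z :=
      (mem_liftsRing_subtype_iff.1 (derivPoly_mem_liftsRing
        (S := analyticOnNhdSubalgebra U) (fun _ hf => hf.deriv) hd₀ hd₁ hν₀ hν₁ m) n z hz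
        ).differentiableAt
    rw [iteratedDeriv_succ, (eventuallyEq_of_mem (hU.mem_nhds hz) ih).deriv_eq]
    exact (hasDerivAt_evalAt_mul hcoeff (hw z hz) (hp z hz)).deriv

end DerivPoly

section OperatorPoly

variable (d₀ d₁ ν₀ ν₁ : ℂ → ℂ)

noncomputable def operatorPoly (a : ℕ → ℂ → ℂ) (k : ℕ) : (ℂ → ℂ)[X] :=
  derivPoly d₀ d₁ ν₀ ν₁ k + ∑ j ∈ Finset.range k, C (a j) * derivPoly d₀ d₁ ν₀ ν₁ j

variable {d₀ d₁ ν₀ ν₁} {a : ℕ → ℂ → ℂ} {k : ℕ}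

theorem natDegree_operatorPoly_le : (operatorPoly d₀ d₁ ν₀ ν₁ a k).natDegree ≤ k :=
  natDegree_add_le_of_degree_le (natDegree_derivPoly_le k) <|
    natDegree_sum_le_of_forall_le _ _ fun j hj =>
      (natDegree_C_mul_le _ _).trans ((natDegree_derivPoly_le j).trans (Finset.mem_range.1 hj).le)

theorem coeff_operatorPoly_self :
    (operatorPoly d₀ d₁ ν₀ ν₁ a k).coeff k = ∏ j ∈ Finset.range k, (d₀ - j) := by
  rw [operatorPoly, coeff_add, coeff_derivPoly_self, finsetSum_coeff, add_eq_left]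
  refine Finset.sum_eq_zero fun j hj => ?_
  rw [coeff_C_mul, coeff_eq_zero_of_natDegree_lt
    ((natDegree_derivPoly_le j).trans_lt (Finset.mem_range.1 hj)), mul_zero]

theorem operatorPoly_mem_liftsRing {S : Subalgebra ℂ (ℂ → ℂ)} (hS : ∀ f ∈ S, deriv f ∈ S)
    (ha : ∀ j < k, a j ∈ S) (hd₀ : d₀ ∈ S) (hd₁ : d₁ ∈ S) (hν₀ : ν₀ ∈ S) (hν₁ : ν₁ ∈ S) :
    operatorPoly d₀ d₁ ν₀ ν₁ a k ∈ liftsRing S.toSubring.subtype :=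
  add_mem (derivPoly_mem_liftsRing hS hd₀ hd₁ hν₀ hν₁ k) <| sum_mem fun j hj =>
    mul_mem ((lifts_iff_liftsRing _ _).1 (C_mem_lifts S.toSubring.subtype
      ⟨a j, ha j (Finset.mem_range.1 hj)⟩)) (derivPoly_mem_liftsRing hS hd₀ hd₁ hν₀ hν₁ j)

end OperatorPoly

theorem linear_operator_on_logderiv_related_pair_general
    (k : ℕ) (a : ℕ → ℂ → ℂ) (d₀ d₁ ν₀ ν₁ : ℂ → ℂ)
    (ha : ∀ j, j < k → RationalAtInfinity (a j))
    (hd₀ : RationalAtInfinity d₀) (hd₁ : RationalAtInfinity d₁)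
    (hν₀ : RationalAtInfinity ν₀) (hν₁ : RationalAtInfinity ν₁) :
    ∃ b : ℕ → ℂ → ℂ, (∀ j, j ≤ k → RationalAtInfinity (b j)) ∧
      (∃ r' : ℝ, 0 < r' ∧ ∀ z : ℂ, r' < ‖z‖ →
        b k z = ∏ j ∈ Finset.range k, (d₀ z - (j : ℂ))) ∧
      ∀ (r : ℝ) (U : Set ℂ), 0 < r → IsOpen U → IsConnected U →
        U ⊆ {z : ℂ | r < ‖z‖} →
        (∀ j, j < k → AnalyticOnNhd ℂ (a j) U) →
        AnalyticOnNhd ℂ d₀ U → AnalyticOnNhd ℂ d₁ U →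
        AnalyticOnNhd ℂ ν₀ U → AnalyticOnNhd ℂ ν₁ U →
        (∀ j, j ≤ k → AnalyticOnNhd ℂ (b j) U) →
        ∀ p q : ℂ → ℂ, AnalyticOnNhd ℂ p U → AnalyticOnNhd ℂ q U →
        (∀ z ∈ U, p z ≠ 0) → (∀ z ∈ U, q z ≠ 0) →
        (∀ z ∈ U, deriv p z / p z = d₀ z * (deriv q z / q z) + d₁ z) →
        (∀ z ∈ U, iteratedDeriv 2 q z + ν₁ z * deriv q z + ν₀ z * q z = 0) →
        ∀ z ∈ U,
          (iteratedDeriv k p z + ∑ j ∈ Finset.range k, a j z * iteratedDeriv j p z) / p z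
            = ∑ j ∈ Finset.range (k + 1), b j z * (deriv q z / q z) ^ j := by
  refine ⟨(operatorPoly d₀ d₁ ν₀ ν₁ a k).coeff, fun j _ => ?_, ⟨1, one_pos, fun z _ => ?_⟩, ?_⟩
  · exact mem_liftsRing_subtype_iff.1 (operatorPoly_mem_liftsRing
      (S := rationalAtInfinitySubalgebra) (fun _ => .deriv) ha hd₀ hd₁ hν₀ hν₁) j
  · simp [coeff_operatorPoly_self, Finset.prod_apply]
  intro r U _ hU _ _ _ hd₀U hd₁U hν₀U hν₁U _ p q hp hq hp0 hq0 hpq hode z hz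
  have hw : ∀ z ∈ U, HasDerivAt (logDeriv q) (-(logDeriv q z ^ 2 + ν₁ z * logDeriv q z + ν₀ z)) z :=
    fun z hz => hasDerivAt_logDeriv_of_ode (hq z hz).differentiableAt
      (hq.deriv z hz).differentiableAt (hq0 z hz) (hode z hz)
  have hp' : ∀ z ∈ U, HasDerivAt p ((d₀ z * logDeriv q z + d₁ z) * p z) z := fun z hz =>
    (hp z hz).differentiableAt.hasDerivAt.congr_deriv <| by
      rw [logDeriv_apply, ← hpq z hz, div_mul_cancel₀ _ (hp0 z hz)]
  have hL := iteratedDeriv_eq_evalAt_derivPoly_mul hU hd₀U hd₁U hν₀U hν₁U hw hp'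
  rw [div_eq_iff (hp0 z hz), ← logDeriv_apply,
    ← evalAt_eq_sum_range' (Nat.lt_succ_of_le natDegree_operatorPoly_le)]
  simp [operatorPoly, hL _ z hz, add_mul, Finset.sum_mul, mul_assoc]

/-- first part of Lemma 3.3: if `p'/p = d₀ q'/q + d₁` and
`q'' + ν₁ q' + ν₀ q = 0`, with all coefficients rational at infinity, then
`L[p]/p = Σ_{j=0}^k b_j (q'/q)^j` with the `b_j` rational at infinity and
`b_k = d₀(d₀−1)⋯(d₀−k+1)`. -/
theorem linear_operator_on_logderiv_related_pair
    (k : ℕ) (hk : 1 ≤ k) (a : ℕ → ℂ → ℂ) (d₀ d₁ ν₀ ν₁ : ℂ → ℂ)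
    (ha : ∀ j, j < k → RationalAtInfinity (a j))
    (hd₀ : RationalAtInfinity d₀) (hd₁ : RationalAtInfinity d₁)
    (hν₀ : RationalAtInfinity ν₀) (hν₁ : RationalAtInfinity ν₁) :
    ∃ b : ℕ → ℂ → ℂ, (∀ j, j ≤ k → RationalAtInfinity (b j)) ∧
      (∃ r' : ℝ, 0 < r' ∧ ∀ z : ℂ, r' < ‖z‖ →
        b k z = ∏ j ∈ Finset.range k, (d₀ z - (j : ℂ))) ∧
      ∀ (r : ℝ) (U : Set ℂ), 0 < r → IsOpen U → IsConnected U →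
        U ⊆ {z : ℂ | r < ‖z‖} →
        (∀ j, j < k → AnalyticOnNhd ℂ (a j) U) →
        AnalyticOnNhd ℂ d₀ U → AnalyticOnNhd ℂ d₁ U →
        AnalyticOnNhd ℂ ν₀ U → AnalyticOnNhd ℂ ν₁ U →
        (∀ j, j ≤ k → AnalyticOnNhd ℂ (b j) U) →
        ∀ p q : ℂ → ℂ, AnalyticOnNhd ℂ p U → AnalyticOnNhd ℂ q U →
        (∀ z ∈ U, p z ≠ 0) → (∀ z ∈ U, q z ≠ 0) →
        (∀ z ∈ U, deriv p z / p z = d₀ z * (deriv q z / q z) + d₁ z) →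
        (∀ z ∈ U, iteratedDeriv 2 q z + ν₁ z * deriv q z + ν₀ z * q z = 0) →
        ∀ z ∈ U,
          (iteratedDeriv k p z + ∑ j ∈ Finset.range k, a j z * iteratedDeriv j p z) / p z
            = ∑ j ∈ Finset.range (k + 1), b j z * (deriv q z / q z) ^ j :=
  linear_operator_on_logderiv_related_pair_general k a d₀ d₁ ν₀ ν₁ ha hd₀ hd₁ hν₀ hν₁
end

section
/- Let k ≥ 2 and let G, Φ, p₁, …, p_k, c₀, …, c_{k−2}, C₀, …, C_{k−2} be analytic functions on a plane domain U, such that p₁, …, p_k are linearly independent solutions on U of y^{(k)} + c_{k−2}y^{(k−2)} + ⋯ + c₀y = 0. Adopt the conventions C_k = 1, c_{k−1} = C_{k−1} = c_{−1} = C_{−1} = 0, and for 0 ≤ μ ≤ k define the operator M_{k,μ}[w] = Σ_{m=μ}^{k} (m!/(μ!(m−μ)!))·C_m·w^{(m−μ)}, together with M_{k,−1}[w] = 0. Then the k functions p₁′G + p₁Φ, …, p_k′G + p_kΦ are all solutions on U of y^{(k)} + C_{k−2}y^{(k−2)} + ⋯ + C₀y = 0 if and only if G and Φ satisfy, for every 0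 ≤ μ ≤ k−1, the identity M_{k,μ}[Φ] − c_μΦ = −M_{k,μ−1}[G] + c_μ·M_{k,k−1}[G] + (c_μ′ + c_{μ−1})·G on U. -/
/-!
Write `L[y] = Σ_{m ≤ k} c_m y⁽ᵐ⁾` and `L*[y] = Σ_{m ≤ k} C_m y⁽ᵐ⁾`. By the Leibniz rule,
`L*[f'G + fΦ] = Σ_{i ≤ k} (M_{k,i}[G] f⁽ⁱ⁺¹⁾ + M_{k,i}[Φ] f⁽ⁱ⁾)`. If `L[f] = 0`, then `f⁽ᵏ⁾` and,
differentiating the equation once, `f⁽ᵏ⁺¹⁾` are combinations of `f, …, f⁽ᵏ⁻¹⁾`; hence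
`L*[f'G + fΦ] = Σ_{μ < k} B_μ f⁽ᵘ⁾`, where `B_μ = 0` is the `μ`-th identity of the lemma.

Conversely, the Wronskian matrix `(p_j⁽ᵘ⁾(z))` of independent solutions is invertible at every
`z ∈ U`: a combination of the `p_j` with vanishing derivatives of order `< k` at `z` solves
`L[y] = 0` with zero initial data, so all its derivatives vanish at `z` and it is zero on `U` by
the identity theorem. So `Σ_μ B_μ(z) p_j⁽ᵘ⁾(z) = 0` for all `j` forces `B(z) = 0`.
-/

/-- The operator `M_{k,μ}[w] = Σ_{m=μ}^k (m choose μ) C_m w^{(m−μ)}` of the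
Frank–Hellerstein lemma. -/
noncomputable def FrankMop (k : ℕ) (C : ℕ → ℂ → ℂ) (μ : ℕ) (w : ℂ → ℂ) (z : ℂ) : ℂ :=
  ∑ m ∈ Finset.Icc μ k, (m.choose μ : ℂ) * C m z * iteratedDeriv (m - μ) w z

open Finset Filter Topology

section Calculus

variable {𝕜 F : Type*} [NontriviallyNormedField 𝕜] [NormedAddCommGroup F] [NormedSpace 𝕜 F]

theorem AnalyticOnNhd.iteratedDeriv [CompleteSpace F] {s : Set 𝕜} {f : 𝕜 → F}
    (hf : AnalyticOnNhd 𝕜 f s) (n : ℕ) : AnalyticOnNhd 𝕜 (iteratedDeriv n f) s := by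
  rw [iteratedDeriv_eq_iterate]
  exact hf.iterated_deriv n

theorem iteratedDeriv_add_eq_iteratedDeriv_iteratedDeriv (m n : ℕ) (f : 𝕜 → F) :
    iteratedDeriv (m + n) f = iteratedDeriv m (iteratedDeriv n f) := by
  simp only [iteratedDeriv_eq_iterate, Function.iterate_add]
  rfl

end Calculus

theorem sum_range_mul_succ {R : Type*} [NonUnitalNonAssocSemiring R] (s v : ℕ → R) (n : ℕ) :
    ∑ i ∈ range n, s i * v (i + 1)
      = ∑ μ ∈ range (n + 1), (if μ = 0 then 0 else s (μ - 1)) * v μ := by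
  simp [sum_range_succ' _ n]

section LinearODE

variable {U : Set ℂ} {k : ℕ} {a : ℕ → ℂ → ℂ} {f : ℂ → ℂ} {z : ℂ}

theorem iteratedDeriv_eq_neg_sum_of_linearODE (hak : a k z = 1)
    (hsol : ∑ m ∈ range (k + 1), a m z * iteratedDeriv m f z = 0) :
    iteratedDeriv k f z = -∑ μ ∈ range k, a μ z * iteratedDeriv μ f z := by
  rw [sum_range_succ, hak, one_mul] at hsol
  exact eq_neg_of_add_eq_zero_right hsol

theorem iteratedDeriv_succ_eq_neg_sum_of_linearODE (hU : IsOpen U)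
    (ha : ∀ m ≤ k, AnalyticOnNhd ℂ (a m) U) (hak : ∀ z ∈ U, a k z = 1) (hak1 : a (k - 1) z = 0)
    (hf : AnalyticOnNhd ℂ f U)
    (hsol : ∀ z ∈ U, ∑ m ∈ range (k + 1), a m z * iteratedDeriv m f z = 0) (hz : z ∈ U) :
    iteratedDeriv (k + 1) f z
      = -∑ μ ∈ range k,
          (deriv (a μ) z + (if μ = 0 then 0 else a (μ - 1) z)) * iteratedDeriv μ f z := by
  have ha' : ∀ m ∈ range (k + 1), DifferentiableAt ℂ (a m) z :=
    fun m hm => (ha m (Nat.lt_succ_iff.mp (mem_range.mp hm)) z hz).differentiableAt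
  have hf' : ∀ m, DifferentiableAt ℂ (iteratedDeriv m f) z :=
    fun m => (hf.iteratedDeriv m z hz).differentiableAt
  have hsol' : ∑ m ∈ range (k + 1),
      (deriv (a m) z * iteratedDeriv m f z + a m z * iteratedDeriv (m + 1) f z) = 0 := by
    have hconst : (fun w => ∑ m ∈ range (k + 1), a m w * iteratedDeriv m f w) =ᶠ[𝓝 z] fun _ => 0 :=
      eventually_of_mem (hU.mem_nhds hz) hsol
    rw [← deriv_const z (0 : ℂ), ← hconst.deriv_eq,
      deriv_fun_sum (A := fun m w => a m w * iteratedDeriv m f w)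
        fun m hm => (ha' m hm).mul (hf' m)]
    refine sum_congr rfl fun m hm => ?_
    rw [deriv_fun_mul (ha' m hm) (hf' m), iteratedDeriv_succ]
  have hak' : deriv (a k) z = 0 := by
    have hconst : a k =ᶠ[𝓝 z] fun _ => 1 := eventually_of_mem (hU.mem_nhds hz) hak
    rw [hconst.deriv_eq, deriv_const]
  have hshift : (if k = 0 then 0 else a (k - 1) z) = 0 := by split_ifs <;> simp [hak1]
  rw [sum_add_distrib, sum_range_succ, hak', zero_mul, add_zero,
    sum_range_mul_succ (fun m => a m z) (fun n => iteratedDeriv n f z), sum_range_succ,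
    sum_range_succ, hshift, Nat.add_sub_cancel, if_neg k.succ_ne_zero, hak z hz] at hsol'
  simp only [add_mul, sum_add_distrib]
  linear_combination hsol'

/-- Differentiating `f⁽ᵏ⁾ = -Σ_{m<k} aₘ f⁽ᵐ⁾` `j` times expresses `f⁽ʲ⁺ᵏ⁾` through derivatives of
lower order, so vanishing initial data propagate to all orders. -/
theorem iteratedDeriv_eq_zero_of_linearODE (hU : IsOpen U)
    (ha : ∀ m < k, AnalyticOnNhd ℂ (a m) U) (hak : ∀ z ∈ U, a k z = 1)
    (hf : AnalyticOnNhd ℂ f U)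
    (hsol : ∀ z ∈ U, ∑ m ∈ range (k + 1), a m z * iteratedDeriv m f z = 0)
    (hz : z ∈ U) (hinit : ∀ i < k, iteratedDeriv i f z = 0) (n : ℕ) :
    iteratedDeriv n f z = 0 := by
  induction n using Nat.strong_induction_on with
  | _ n ih =>
    obtain hn | hn := lt_or_ge n k
    · exact hinit n hn
    obtain ⟨j, rfl⟩ := Nat.exists_eq_add_of_le' hn
    have hf_top : Set.EqOn (iteratedDeriv k f)
        (fun w => -∑ m ∈ range k, a m w * iteratedDeriv m f w) U := fun w hw =>
      iteratedDeriv_eq_neg_sum_of_linearODE (hak w hw) (hsol w hw)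
    have hterm : ∀ m ∈ range k, ContDiffAt ℂ j (fun w => a m w * iteratedDeriv m f w) z :=
      fun m hm => ((ha m (mem_range.mp hm) z hz).mul (hf.iteratedDeriv m z hz)).contDiffAt
    rw [iteratedDeriv_add_eq_iteratedDeriv_iteratedDeriv, hf_top.iteratedDeriv_of_isOpen hU j hz,
      iteratedDeriv_fun_neg, iteratedDeriv_fun_sum hterm, neg_eq_zero]
    refine sum_eq_zero fun m hm => ?_
    rw [iteratedDeriv_fun_mul (ha m (mem_range.mp hm) z hz).contDiffAt
      (hf.iteratedDeriv m z hz).contDiffAt]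
    refine sum_eq_zero fun i hi => ?_
    rw [← iteratedDeriv_add_eq_iteratedDeriv_iteratedDeriv,
      ih _ (by have := mem_range.mp hm; have := mem_range.mp hi; omega), mul_zero]

theorem eqOn_zero_of_linearODE (hU : IsOpen U) (hUc : IsPreconnected U)
    (ha : ∀ m < k, AnalyticOnNhd ℂ (a m) U) (hak : ∀ z ∈ U, a k z = 1)
    (hf : AnalyticOnNhd ℂ f U)
    (hsol : ∀ z ∈ U, ∑ m ∈ range (k + 1), a m z * iteratedDeriv m f z = 0)
    (hz : z ∈ U) (hinit : ∀ i < k, iteratedDeriv i f z = 0) :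
    Set.EqOn f 0 U := by
  refine hf.eqOn_zero_of_preconnected_of_eventuallyEq_zero hUc hz (analyticOrderAt_eq_top.mp ?_)
  refine ENat.eq_top_iff_forall_ge.mpr fun n =>
    (natCast_le_analyticOrderAt_iff_iteratedDeriv_eq_zero (hf z hz)).mpr fun i _ => ?_
  exact iteratedDeriv_eq_zero_of_linearODE hU ha hak hf hsol hz hinit i

end LinearODE

section FundamentalSystem

theorem iteratedDeriv_sum_const_mul {ι : Type*} [Fintype ι] {U : Set ℂ} {p : ι → ℂ → ℂ}
    (hp : ∀ j, AnalyticOnNhd ℂ (p j) U) (A : ι → ℂ) {z : ℂ} (hz : z ∈ U) (n : ℕ) :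
    iteratedDeriv n (fun w => ∑ j, A j * p j w) z = ∑ j, A j * iteratedDeriv n (p j) z := by
  rw [iteratedDeriv_fun_sum (f := fun j w => A j * p j w)
    fun j _ => (analyticAt_const.mul (hp j z hz)).contDiffAt]
  simp only [iteratedDeriv_const_mul_field]

noncomputable def wronskianMatrix {k : ℕ} (p : Fin k → ℂ → ℂ) (z : ℂ) :
    Matrix (Fin k) (Fin k) ℂ :=
  Matrix.of fun μ j => iteratedDeriv μ (p j) z

variable {U : Set ℂ} {k : ℕ} {a : ℕ → ℂ → ℂ} {p : Fin k → ℂ → ℂ} {z : ℂ}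

theorem wronskianMatrix_det_ne_zero (hU : IsOpen U) (hUc : IsPreconnected U)
    (ha : ∀ m < k, AnalyticOnNhd ℂ (a m) U) (hak : ∀ z ∈ U, a k z = 1)
    (hp : ∀ j, AnalyticOnNhd ℂ (p j) U)
    (hsol : ∀ j, ∀ z ∈ U, ∑ m ∈ range (k + 1), a m z * iteratedDeriv m (p j) z = 0)
    (hindep : ∀ A : Fin k → ℂ, (∀ z ∈ U, ∑ j, A j * p j z = 0) → ∀ j, A j = 0) (hz : z ∈ U) :
    (wronskianMatrix p z).det ≠ 0 := by
  intro hW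
  obtain ⟨A, hA0, hA⟩ := Matrix.exists_mulVec_eq_zero_iff.mpr hW
  have hq : AnalyticOnNhd ℂ (fun w => ∑ j, A j * p j w) U :=
    Finset.analyticOnNhd_fun_sum _ fun j _ => analyticOnNhd_const.mul (hp j)
  have hqsol : ∀ w ∈ U, ∑ m ∈ range (k + 1),
      a m w * iteratedDeriv m (fun w => ∑ j, A j * p j w) w = 0 := fun w hw => by
    simp only [iteratedDeriv_sum_const_mul hp A hw, mul_sum]
    rw [sum_comm]
    refine sum_eq_zero fun j _ => ?_
    simp only [mul_left_comm (a _ w), ← mul_sum, hsol j w hw, mul_zero]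
  have hinit : ∀ i < k, iteratedDeriv i (fun w => ∑ j, A j * p j w) z = 0 := fun i hi => by
    rw [iteratedDeriv_sum_const_mul hp A hz]
    simpa [Matrix.mulVec, dotProduct, wronskianMatrix, mul_comm] using congrFun hA ⟨i, hi⟩
  have hq0 := eqOn_zero_of_linearODE hU hUc ha hak hq hqsol hz hinit
  exact hA0 (funext (hindep A fun w hw => hq0 hw))

theorem eq_zero_of_sum_mul_iteratedDeriv_eq_zero (hU : IsOpen U) (hUc : IsPreconnected U)
    (ha : ∀ m < k, AnalyticOnNhd ℂ (a m) U) (hak : ∀ z ∈ U, a k z = 1)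
    (hp : ∀ j, AnalyticOnNhd ℂ (p j) U)
    (hsol : ∀ j, ∀ z ∈ U, ∑ m ∈ range (k + 1), a m z * iteratedDeriv m (p j) z = 0)
    (hindep : ∀ A : Fin k → ℂ, (∀ z ∈ U, ∑ j, A j * p j z = 0) → ∀ j, A j = 0)
    (hz : z ∈ U) {B : Fin k → ℂ} (hB : ∀ j, ∑ μ, B μ * iteratedDeriv μ (p j) z = 0) :
    B = 0 := by
  by_contra hB0
  refine wronskianMatrix_det_ne_zero hU hUc ha hak hp hsol hindep hz ?_
  exact Matrix.exists_vecMul_eq_zero_iff.mp ⟨B, hB0, funext hB⟩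

end FundamentalSystem

theorem sum_mul_iteratedDeriv_mul_eq_sum_FrankMop (k : ℕ) (C : ℕ → ℂ → ℂ) {u w : ℂ → ℂ}
    {z : ℂ} (hu : AnalyticAt ℂ u z) (hw : AnalyticAt ℂ w z) :
    ∑ m ∈ range (k + 1), C m z * iteratedDeriv m (fun x => u x * w x) z
      = ∑ i ∈ range (k + 1), FrankMop k C i w z * iteratedDeriv i u z := by
  simp only [iteratedDeriv_fun_mul hu.contDiffAt hw.contDiffAt, FrankMop, mul_sum, sum_mul]
  refine sum_comm' (fun m i => ?_) |>.trans (sum_congr rfl fun i _ => sum_congr rfl fun m _ => ?_)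
  · simp only [mem_range, mem_Icc]
    omega
  · ring

noncomputable def frankDefect (k : ℕ) (c C : ℕ → ℂ → ℂ) (G Φ : ℂ → ℂ) (μ : ℕ) (z : ℂ) : ℂ :=
  FrankMop k C μ Φ z + (if μ = 0 then 0 else FrankMop k C (μ - 1) G z)
    - c μ z * (Φ z + FrankMop k C (k - 1) G z)
    - (deriv (c μ) z + (if μ = 0 then 0 else c (μ - 1) z)) * G z

section FrankDefect

variable {U : Set ℂ} {k : ℕ} {c C : ℕ → ℂ → ℂ} {G Φ f : ℂ → ℂ} {z : ℂ}

theorem frankDefect_eq_zero_iff {μ : ℕ} :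
    frankDefect k c C G Φ μ z = 0 ↔
      FrankMop k C μ Φ z - c μ z * Φ z
        = -(if μ = 0 then 0 else FrankMop k C (μ - 1) G z)
          + c μ z * FrankMop k C (k - 1) G z
          + (deriv (c μ) z + (if μ = 0 then 0 else c (μ - 1) z)) * G z := by
  rw [frankDefect]
  constructor <;> intro h <;> linear_combination h

theorem sum_mul_iteratedDeriv_eq_sum_frankDefect (hU : IsOpen U) (hk : k ≠ 0)
    (hc : ∀ m ≤ k, AnalyticOnNhd ℂ (c m) U) (hck : ∀ z ∈ U, c k z = 1) (hck1 : c (k - 1) z = 0)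
    (hCk : C k z = 1) (hG : AnalyticOnNhd ℂ G U) (hΦ : AnalyticOnNhd ℂ Φ U)
    (hf : AnalyticOnNhd ℂ f U)
    (hsol : ∀ z ∈ U, ∑ m ∈ range (k + 1), c m z * iteratedDeriv m f z = 0) (hz : z ∈ U) :
    ∑ m ∈ range (k + 1), C m z * iteratedDeriv m (fun w => deriv f w * G w + f w * Φ w) z
      = ∑ μ ∈ range k, frankDefect k c C G Φ μ z * iteratedDeriv μ f z := by
  have hMk : ∀ w, FrankMop k C k w z = w z := by simp [FrankMop, hCk]
  have hsplit : ∀ m, iteratedDeriv m (fun w => deriv f w * G w + f w * Φ w) z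
      = iteratedDeriv m (fun w => deriv f w * G w) z + iteratedDeriv m (fun w => f w * Φ w) z :=
    fun m => iteratedDeriv_fun_add ((hf.deriv z hz).mul (hG z hz)).contDiffAt
      ((hf z hz).mul (hΦ z hz)).contDiffAt
  simp only [hsplit, mul_add, sum_add_distrib]
  rw [sum_mul_iteratedDeriv_mul_eq_sum_FrankMop k C (hf.deriv z hz) (hG z hz),
    sum_mul_iteratedDeriv_mul_eq_sum_FrankMop k C (hf z hz) (hΦ z hz)]
  simp only [← iteratedDeriv_succ']
  rw [sum_range_mul_succ (fun i => FrankMop k C i G z) (fun n => iteratedDeriv n f z),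
    sum_range_succ, sum_range_succ, sum_range_succ, if_neg hk, if_neg k.succ_ne_zero,
    Nat.add_sub_cancel, hMk, hMk,
    iteratedDeriv_eq_neg_sum_of_linearODE (hck z hz) (hsol z hz),
    iteratedDeriv_succ_eq_neg_sum_of_linearODE hU hc hck hck1 hf hsol hz]
  simp only [mul_neg, mul_sum, ← sum_neg_distrib, ← sum_add_distrib]
  refine sum_congr rfl fun μ _ => ?_
  rw [frankDefect]
  ring

end FrankDefect

theorem frank_hellerstein_lemma_general
    (k : ℕ) (hk : 2 ≤ k) (U : Set ℂ) (hUo : IsOpen U) (hUc : IsConnected U)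
    (G Φ : ℂ → ℂ) (p : Fin k → ℂ → ℂ) (c C : ℕ → ℂ → ℂ)
    (hG : AnalyticOnNhd ℂ G U) (hΦ : AnalyticOnNhd ℂ Φ U)
    (hp : ∀ j, AnalyticOnNhd ℂ (p j) U)
    (hc : ∀ μ, μ ≤ k → AnalyticOnNhd ℂ (c μ) U)
    (hck : ∀ z : ℂ, c k z = 1) (hCk : ∀ z : ℂ, C k z = 1)
    (hck1 : ∀ z : ℂ, c (k - 1) z = 0)
    (hsol : ∀ j : Fin k, ∀ z ∈ U,
        ∑ m ∈ Finset.range (k + 1), c m z * iteratedDeriv m (p j) z = 0)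
    (hindep : ∀ A : Fin k → ℂ, (∀ z ∈ U, ∑ j, A j * p j z = 0) → ∀ j, A j = 0) :
    (∀ j : Fin k, ∀ z ∈ U,
        ∑ m ∈ Finset.range (k + 1),
          C m z * iteratedDeriv m (fun w => deriv (p j) w * G w + p j w * Φ w) z = 0)
      ↔
    (∀ μ : ℕ, μ ≤ k - 1 → ∀ z ∈ U,
        FrankMop k C μ Φ z - c μ z * Φ z
          = -(if μ = 0 then 0 else FrankMop k C (μ - 1) G z)
            + c μ z * FrankMop k C (k - 1) G z
            + (deriv (c μ) z + (if μ = 0 then 0 else c (μ - 1) z)) * G z) := by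
  have hdefect : ∀ j, ∀ z ∈ U,
      ∑ m ∈ range (k + 1),
          C m z * iteratedDeriv m (fun w => deriv (p j) w * G w + p j w * Φ w) z
        = ∑ μ ∈ range k, frankDefect k c C G Φ μ z * iteratedDeriv μ (p j) z :=
    fun j z hz => sum_mul_iteratedDeriv_eq_sum_frankDefect hUo (by omega) hc (fun z _ => hck z)
      (hck1 z) (hCk z) hG hΦ (hp j) (hsol j) hz
  constructor
  · intro hL μ hμ z hz
    have hB : (fun ν : Fin k => frankDefect k c C G Φ ν z) = 0 := by
      refine eq_zero_of_sum_mul_iteratedDeriv_eq_zero hUo hUc.isPreconnected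
        (fun m hm => hc m hm.le) (fun z _ => hck z) hp hsol hindep hz fun j => ?_
      rw [Fin.sum_univ_eq_sum_range (fun ν => frankDefect k c C G Φ ν z * iteratedDeriv ν (p j) z),
        ← hdefect j z hz]
      exact hL j z hz
    exact frankDefect_eq_zero_iff.mp (congrFun hB ⟨μ, by omega⟩)
  · intro hM j z hz
    rw [hdefect j z hz]
    refine sum_eq_zero fun μ hμ => ?_
    rw [frankDefect_eq_zero_iff.mpr (hM μ (by have := mem_range.mp hμ; omega) z hz), zero_mul]

/-- Lemma 5.1, the Frank–Hellerstein lemma: with the conventions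
`C_k = 1`, `c_{k−1} = C_{k−1} = c_{−1} = C_{−1} = 0` and `M_{k,−1}[w] = 0`, the
functions `p_j'G + p_jΦ` all solve `y^{(k)} + C_{k−2}y^{(k−2)} + ⋯ + C₀y = 0`
if and only if for every `0 ≤ μ ≤ k−1`,
`M_{k,μ}[Φ] − c_μΦ = −M_{k,μ−1}[G] + c_μ M_{k,k−1}[G] + (c_μ' + c_{μ−1})G` on `U`. -/
theorem frank_hellerstein_lemma
    (k : ℕ) (hk : 2 ≤ k) (U : Set ℂ) (hUo : IsOpen U) (hUc : IsConnected U)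
    (G Φ : ℂ → ℂ) (p : Fin k → ℂ → ℂ) (c C : ℕ → ℂ → ℂ)
    (hG : AnalyticOnNhd ℂ G U) (hΦ : AnalyticOnNhd ℂ Φ U)
    (hp : ∀ j, AnalyticOnNhd ℂ (p j) U)
    (hc : ∀ μ, μ ≤ k → AnalyticOnNhd ℂ (c μ) U)
    (hC : ∀ μ, μ ≤ k → AnalyticOnNhd ℂ (C μ) U)
    (hck : ∀ z : ℂ, c k z = 1) (hCk : ∀ z : ℂ, C k z = 1)
    (hck1 : ∀ z : ℂ, c (k - 1) z = 0) (hCk1 : ∀ z : ℂ, C (k - 1) z = 0)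
    (hsol : ∀ j : Fin k, ∀ z ∈ U,
        ∑ m ∈ Finset.range (k + 1), c m z * iteratedDeriv m (p j) z = 0)
    (hindep : ∀ A : Fin k → ℂ, (∀ z ∈ U, ∑ j, A j * p j z = 0) → ∀ j, A j = 0) :
    (∀ j : Fin k, ∀ z ∈ U,
        ∑ m ∈ Finset.range (k + 1),
          C m z * iteratedDeriv m (fun w => deriv (p j) w * G w + p j w * Φ w) z = 0)
      ↔
    (∀ μ : ℕ, μ ≤ k - 1 → ∀ z ∈ U,
        FrankMop k C μ Φ z - c μ z * Φ z
          = -(if μ = 0 then 0 else FrankMop k C (μ - 1) G z)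
            + c μ z * FrankMop k C (k - 1) G z
            + (deriv (c μ) z + (if μ = 0 then 0 else c (μ - 1) z)) * G z) :=
  frank_hellerstein_lemma_general k hk U hUo hUc G Φ p c C hG hΦ hp hc hck hCk hck1 hsol hindep
end

section
/- Let n ≥ 1 and m ≥ 1 be integers. There exist rational functions c_{1,m}, …, c_{m,m} (depending only on m and n), with c_{m,m}(z) = (n·z^{n−1})^{−m}, such that for every open set U ⊆ ℂ, every analytic function f on U, and every z ≠ 0 with z^n ∈ U at which all the c_{p,m} are finite, one has f^{(m)}(z^n) = Σ_{p=1}^{m} c_{p,m}(z)·𝔣^{(p)}(z), where 𝔣(z) = f(z^n). Moreover, if m ≥ 2 then c_{m−1,m}(z)/c_{m,m}(z) → 0 as z → ∞. -/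
/-!
Write `D = (n z^{n-1})⁻¹ d/dz`. The chain rule gives `f^{(m)}(zⁿ) = (D^m 𝔣)(z)` wherever
`z ≠ 0` and `zⁿ ∈ U`. Since `D (z^p (n zⁿ)^{-m}) = (p - m n) z^p (n zⁿ)^{-(m+1)}` and
`D (g^{(p)}) = z (n zⁿ)^{-1} g^{(p+1)}`, the Leibniz rule shows by induction that
`D^m = Σ_p a_{m,p} z^p (n zⁿ)^{-m} d^p/dz^p` with scalars `a_{m,p}` satisfying
`a_{m+1,p} = (p - m n) a_{m,p} + a_{m,p-1}`. Hence `a_{m,m} = 1`, `a_{m,0} = 0` for `m ≥ 1`, and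
`c_{m-1,m} / c_{m,m} = a_{m,m-1} / z → 0`.
-/

open Filter Finset Topology

universe u

theorem DifferentiableOn.differentiableAt_iteratedDeriv {E : Type*}
    [NormedAddCommGroup E] [NormedSpace ℂ E] [CompleteSpace E] {f : ℂ → E} {U : Set ℂ}
    (hf : DifferentiableOn ℂ f U) (hU : IsOpen U) (k : ℕ) {z : ℂ} (hz : z ∈ U) :
    DifferentiableAt ℂ (iteratedDeriv k f) z := by
  rw [iteratedDeriv_eq_iterate]
  exact ((hf.analyticOnNhd hU).iterated_deriv k z hz).differentiableAt

theorem RatFunc.eval_algebraMap_div {K L : Type u} [Field K] [Field L] (f : K →+* L)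
    (a : L) (p q : Polynomial K) (hq : q.eval₂ f a ≠ 0) :
    RatFunc.eval f a (algebraMap _ (RatFunc K) p / algebraMap _ _ q)
      = p.eval₂ f a / q.eval₂ f a := by
  have hq0 : q ≠ 0 := by rintro rfl; simp at hq
  set r := algebraMap _ (RatFunc K) p / algebraMap _ _ q
  have hcross : r.num * q = p * r.denom := (RatFunc.num_mul_eq_mul_denom_iff hq0).mpr rfl
  obtain ⟨t, ht⟩ := RatFunc.denom_div_dvd p q
  have hden : r.denom.eval₂ f a ≠ 0 := fun h => hq (by rw [ht, Polynomial.eval₂_mul, h, zero_mul])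
  rw [RatFunc.eval, div_eq_div_iff hden hq, ← Polynomial.eval₂_mul, hcross, Polynomial.eval₂_mul]

namespace ChangeOfVariables

noncomputable def coeff (n : ℕ) : ℕ → ℕ → ℂ
  | 0, p => if p = 0 then 1 else 0
  | m + 1, 0 => -(m * n : ℂ) * coeff n m 0
  | m + 1, p + 1 => ((p + 1 : ℂ) - m * n) * coeff n m (p + 1) + coeff n m p

theorem coeff_eq_zero_of_lt {n m p : ℕ} (h : m < p) : coeff n m p = 0 := by
  induction m generalizing p with
  | zero => simp [coeff, Nat.pos_iff_ne_zero.mp h]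
  | succ m ih =>
    obtain ⟨p, rfl⟩ : ∃ q, p = q + 1 := ⟨p - 1, by omega⟩
    simp [coeff, ih (show m < p + 1 by omega), ih (show m < p by omega)]

theorem coeff_self (n m : ℕ) : coeff n m m = 1 := by
  induction m with
  | zero => simp [coeff]
  | succ m ih => simp [coeff, ih, coeff_eq_zero_of_lt (Nat.lt_succ_self m)]

theorem coeff_succ_zero (n m : ℕ) : coeff n (m + 1) 0 = 0 := by
  induction m with
  | zero => simp [coeff]
  | succ m ih => rw [coeff, ih, mul_zero]

theorem sum_range_coeff_succ_mul (n m : ℕ) (W : ℕ → ℂ) :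
    ∑ p ∈ range (m + 1 + 1), coeff n (m + 1) p * W p
      = ∑ p ∈ range (m + 1), coeff n m p * ((p - m * n) * W p + W (p + 1)) := by
  have hshift : ∑ p ∈ range (m + 1), coeff n m p * ((p - m * n) * W p)
      = ∑ p ∈ range (m + 1), coeff n m (p + 1) * (((p + 1 : ℕ) - m * n) * W (p + 1))
        + coeff n m 0 * (((0 : ℕ) - m * n) * W 0) := by
    rw [← sum_range_succ' (fun p => coeff n m p * ((p - m * n) * W p)), sum_range_succ _ (m + 1),
      coeff_eq_zero_of_lt (Nat.lt_succ_self m), zero_mul, add_zero]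
  simp only [mul_add, sum_add_distrib, hshift, sum_range_succ' _ (m + 1), coeff]
  rw [add_right_comm, ← sum_add_distrib]
  push_cast
  congr 1
  · exact sum_congr rfl fun p _ => by ring
  · ring

noncomputable def weight (n m p : ℕ) (w : ℂ) : ℂ := w ^ ((p : ℤ) - m * n) / (n : ℂ) ^ m

theorem weight_eq_pow_div {n m p : ℕ} {z : ℂ} (hz : z ≠ 0) :
    weight n m p z = z ^ p / (n * z ^ n) ^ m := by
  rw [weight, zpow_sub₀ hz, zpow_natCast, ← Nat.cast_mul, zpow_natCast,
    mul_pow, ← pow_mul, mul_comm n m, div_div, mul_comm]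

theorem zpow_sub_one_div_pow {n : ℕ} {z : ℂ} (hn : n ≠ 0) (hz : z ≠ 0) (e : ℤ) (m : ℕ) :
    z ^ (e - 1) / (n : ℂ) ^ m = n * z ^ (n - 1) * (z ^ (e - n) / (n : ℂ) ^ (m + 1)) := by
  have hn' : (n : ℂ) ≠ 0 := Nat.cast_ne_zero.mpr hn
  have hpow : z ^ (n - 1) * z ^ (e - n) = z ^ (e - 1) := by
    rw [← zpow_natCast, ← zpow_add₀ hz, Nat.cast_sub (Nat.one_le_iff_ne_zero.mpr hn)]
    ring_nf
  rw [← hpow]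
  field_simp
  ring

theorem hasDerivAt_weight {n : ℕ} (hn : n ≠ 0) (m p : ℕ) {z : ℂ} (hz : z ≠ 0) :
    HasDerivAt (weight n m p) (n * z ^ (n - 1) * ((p - m * n) * weight n (m + 1) p z)) z := by
  refine ((hasDerivAt_zpow ((p : ℤ) - m * n) z (Or.inl hz)).div_const ((n : ℂ) ^ m)).congr_deriv ?_
  unfold weight
  rw [mul_div_assoc, zpow_sub_one_div_pow hn hz]
  push_cast
  ring_nf

theorem weight_eq_mul_weight_succ_succ {n : ℕ} (hn : n ≠ 0) (m p : ℕ) {z : ℂ} (hz : z ≠ 0) :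
    weight n m p z = n * z ^ (n - 1) * weight n (m + 1) (p + 1) z := by
  unfold weight
  rw [show (p : ℤ) - m * n = p - m * n + 1 - 1 by ring, zpow_sub_one_div_pow hn hz]
  push_cast
  ring_nf

noncomputable def expansion (n m : ℕ) (g : ℂ → ℂ) (w : ℂ) : ℂ :=
  ∑ p ∈ range (m + 1), coeff n m p * weight n m p w * iteratedDeriv p g w

theorem hasDerivAt_expansion {n : ℕ} (hn : n ≠ 0) (m : ℕ) {g : ℂ → ℂ} {z : ℂ} (hz : z ≠ 0)
    (hg : ∀ p, DifferentiableAt ℂ (iteratedDeriv p g) z) :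
    HasDerivAt (expansion n m g) (n * z ^ (n - 1) * expansion n (m + 1) g z) z := by
  have hterm : ∀ p, HasDerivAt (fun w => coeff n m p * weight n m p w * iteratedDeriv p g w)
      (coeff n m p * (n * z ^ (n - 1) * ((p - m * n) * weight n (m + 1) p z))
          * iteratedDeriv p g z
        + coeff n m p * weight n m p z * iteratedDeriv (p + 1) g z) z := fun p => by
    rw [iteratedDeriv_succ]
    exact ((hasDerivAt_weight hn m p hz).const_mul _).mul (hg p).hasDerivAt
  refine (HasDerivAt.fun_sum fun p (_ : p ∈ range (m + 1)) => hterm p).congr_deriv ?_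
  unfold expansion
  simp only [mul_assoc (coeff n (m + 1) _), sum_range_coeff_succ_mul, mul_sum]
  refine sum_congr rfl fun p _ => ?_
  rw [weight_eq_mul_weight_succ_succ hn m p hz]
  ring

theorem iteratedDeriv_eq_expansion {n : ℕ} (hn : n ≠ 0) {U : Set ℂ} (hU : IsOpen U) {f : ℂ → ℂ}
    (hf : DifferentiableOn ℂ f U) (m : ℕ) {z : ℂ} (hz : z ≠ 0) (hzU : z ^ n ∈ U) :
    iteratedDeriv m f (z ^ n) = expansion n m (fun w => f (w ^ n)) z := by
  have hV : IsOpen ((· ^ n) ⁻¹' U) := hU.preimage (continuous_pow n)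
  have hg : DifferentiableOn ℂ (fun w => f (w ^ n)) ((· ^ n) ⁻¹' U) :=
    hf.comp (differentiable_pow n).differentiableOn fun _ hw => hw
  induction m generalizing z with
  | zero => simp [expansion, coeff, weight]
  | succ m ih =>
    have hS : IsOpen {w : ℂ | w ≠ 0 ∧ w ^ n ∈ U} := isOpen_ne.inter hV
    have heq : (fun w => iteratedDeriv m f (w ^ n)) =ᶠ[𝓝 z] expansion n m (fun w => f (w ^ n)) :=
      eventually_of_mem (hS.mem_nhds ⟨hz, hzU⟩) fun w hw => ih hw.1 hw.2
    have hlhs : HasDerivAt (fun w => iteratedDeriv m f (w ^ n))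
        (iteratedDeriv (m + 1) f (z ^ n) * (n * z ^ (n - 1))) z := by
      rw [iteratedDeriv_succ]
      exact (hf.differentiableAt_iteratedDeriv hU m hzU).hasDerivAt.comp z (hasDerivAt_pow n z)
    have hrhs := (hasDerivAt_expansion hn m hz
      fun p => hg.differentiableAt_iteratedDeriv hV p hzU).congr_of_eventuallyEq heq
    have hscale : (n : ℂ) * z ^ (n - 1) ≠ 0 := mul_ne_zero (by exact_mod_cast hn) (pow_ne_zero _ hz)
    exact mul_left_cancel₀ hscale ((mul_comm _ _).trans (hlhs.unique hrhs))

theorem weight_div_weight_succ {n : ℕ} (hn : n ≠ 0) (m p : ℕ) {z : ℂ} (hz : z ≠ 0) :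
    weight n m p z / weight n m (p + 1) z = z⁻¹ := by
  have hn' : (n : ℂ) ≠ 0 := Nat.cast_ne_zero.mpr hn
  rw [weight_eq_pow_div hz, weight_eq_pow_div hz]
  field_simp
  ring

noncomputable def coeffRatFunc (n m p : ℕ) : RatFunc ℂ :=
  RatFunc.C (coeff n m p) * RatFunc.X ^ p / (RatFunc.C (n : ℂ) * RatFunc.X ^ n) ^ m

theorem eval_coeffRatFunc {n : ℕ} (m p : ℕ) {z : ℂ} (hn : n ≠ 0) (hz : z ≠ 0) :
    RatFunc.eval (RingHom.id ℂ) z (coeffRatFunc n m p) = coeff n m p * weight n m p z := by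
  have halg : coeffRatFunc n m p = algebraMap _ _ (Polynomial.C (coeff n m p) * Polynomial.X ^ p)
      / algebraMap _ _ ((Polynomial.C (n : ℂ) * Polynomial.X ^ n) ^ m) := by
    simp [coeffRatFunc, RatFunc.algebraMap_C, RatFunc.algebraMap_X]
  rw [halg, RatFunc.eval_algebraMap_div, weight_eq_pow_div hz]
  · simp [mul_div_assoc]
  · simp [hn, hz]

theorem coeffRatFunc_self {n : ℕ} (hn : n ≠ 0) (m : ℕ) :
    coeffRatFunc n m m = (RatFunc.C (n : ℂ) * RatFunc.X ^ (n - 1))⁻¹ ^ m := by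
  have hC : RatFunc.C (n : ℂ) ≠ 0 := (map_ne_zero _).mpr (Nat.cast_ne_zero.mpr hn)
  rw [coeffRatFunc, coeff_self, map_one, one_mul, ← div_pow, ← pow_sub_one_mul hn]
  field_simp [RatFunc.X_ne_zero]

end ChangeOfVariables

open ChangeOfVariables in
/-- Lemma 9.1, change of variables `z ↦ zⁿ`: there are rational
functions `c_{p,m}` with `c_{m,m}(z) = (n z^{n−1})^{−m}` such that
`f^{(m)}(zⁿ) = Σ_{p=1}^m c_{p,m}(z) 𝔣^{(p)}(z)`, where `𝔣(z) = f(zⁿ)`;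
moreover `c_{m−1,m}/c_{m,m} → 0` at infinity when `m ≥ 2`. -/
theorem change_of_variables_derivatives
    (n m : ℕ) (hn : 1 ≤ n) (hm : 1 ≤ m) :
    ∃ c : ℕ → RatFunc ℂ,
      c m = (RatFunc.C (n : ℂ) * RatFunc.X ^ (n - 1))⁻¹ ^ m ∧
      (∀ U : Set ℂ, IsOpen U → ∀ f : ℂ → ℂ, DifferentiableOn ℂ f U →
        ∀ z : ℂ, z ≠ 0 → z ^ n ∈ U →
        (∀ p : ℕ, 1 ≤ p → p ≤ m → (c p).denom.eval z ≠ 0) →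
        iteratedDeriv m f (z ^ n)
          = ∑ p ∈ Finset.Icc 1 m,
              RatFunc.eval (RingHom.id ℂ) z (c p)
                * iteratedDeriv p (fun w => f (w ^ n)) z) ∧
      (2 ≤ m → Filter.Tendsto
        (fun z : ℂ => RatFunc.eval (RingHom.id ℂ) z (c (m - 1))
          / RatFunc.eval (RingHom.id ℂ) z (c m))
        (Filter.cocompact ℂ) (nhds 0)) := by
  have hn0 : n ≠ 0 := by omega
  refine ⟨coeffRatFunc n m, coeffRatFunc_self hn0 m, ?_, fun hm2 => ?_⟩
  · intro U hU f hf z hz hzU _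
    obtain ⟨k, rfl⟩ : ∃ k, m = k + 1 := ⟨m - 1, by omega⟩
    rw [iteratedDeriv_eq_expansion hn0 hU hf _ hz hzU, expansion,
      sum_range_eq_add_Ico _ (by omega), ← Ico_add_one_right_eq_Icc, coeff_succ_zero]
    simp [eval_coeffRatFunc _ _ hn0 hz, mul_assoc]
  · have hlim := (tendsto_inv₀_cobounded (α := ℂ)).const_mul (coeff n m (m - 1))
    rw [mul_zero] at hlim
    rw [← Metric.cobounded_eq_cocompact]
    refine hlim.congr' ?_
    filter_upwards [Bornology.eventually_ne_cobounded 0] with z hz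
    rw [eval_coeffRatFunc _ _ hn0 hz, eval_coeffRatFunc _ _ hn0 hz, coeff_self, one_mul,
      mul_div_assoc, ← weight_div_weight_succ hn0 m (m - 1) hz, Nat.sub_add_cancel (by omega)]
end

section
/- Let U ⊆ ℂ be a domain and let H be analytic on U with H′ zero-free on U; set δ = H″/H′ and let k ∈ ℕ. Define the differential operator M_k = (D + δ)∘(D + 2δ)∘⋯∘(D + kδ), where D = d/dz and (D + jδ)[w] = w′ + jδw. Then: (a) for every open set V ⊆ ℂ containing H(U) and every analytic φ on V, one has M_k[(H′)^{−k}·(φ∘H)] = φ^{(k)}∘H on U; in particular (b) M_k[(H′)^{−k}·e^{H}] = e^{H} on U; (c) if in addition H is zero-free on U and m ∈ ℕ, then M_k[(H′)^{−k}·H^{−m}] = (−1)^k·m(m+1)⋯(m+k−1)·H^{−m−k} on U; and (d) M_k[(H′)^{−k}·(P∘H)] = 0 on U for every polynomial P of degree at most k−1. -/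
/-!
Since `deriv ((H')⁻¹ ^ (j + 1)) = -(j + 1) • δ • (H')⁻¹ ^ (j + 1)` with `δ = H''/H'`, the factor
`D + (j + 1)δ` kills the derivative falling on the power of `H'`, and the chain rule gives
`(D + (j + 1)δ)[(H')^{-(j+1)} · ψ ∘ H] = (H')^{-j} · ψ' ∘ H`.
Peeling off the factors of `M_k` one at a time therefore differentiates `φ` exactly `k` times
with respect to `H`.
-/

/-- The differential operator `M_k = (D + δ)∘(D + 2δ)∘⋯∘(D + kδ)`,
where `(D + jδ)[w] = w' + jδw`. -/
noncomputable def Mk (δ : ℂ → ℂ) : ℕ → (ℂ → ℂ) → ℂ → ℂ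
  | 0, w => w
  | j + 1, w => Mk δ j (fun z => deriv w z + ((j : ℂ) + 1) * δ z * w z)

theorem Mk_congr {δ : ℂ → ℂ} {U : Set ℂ} (hU : IsOpen U) (j : ℕ) {f g : ℂ → ℂ}
    (hfg : Set.EqOn f g U) : Set.EqOn (Mk δ j f) (Mk δ j g) U := by
  induction j generalizing f g with
  | zero => exact hfg
  | succ j ih =>
    refine ih fun w hw => ?_
    rw [(Filter.eventuallyEq_of_mem (hU.mem_nhds hw) hfg).deriv_eq, hfg hw]

theorem deriv_inv_deriv_pow_mul_comp_add {𝕜 : Type*} [NontriviallyNormedField 𝕜]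
    {H φ : 𝕜 → 𝕜} {w : 𝕜} (j : ℕ) (hH' : deriv H w ≠ 0)
    (hH'' : DifferentiableAt 𝕜 (deriv H) w) (hφ : DifferentiableAt 𝕜 φ (H w)) :
    deriv (fun x => (deriv H x)⁻¹ ^ (j + 1) * φ (H x)) w
        + ((j : 𝕜) + 1) * (iteratedDeriv 2 H w / deriv H w)
          * ((deriv H w)⁻¹ ^ (j + 1) * φ (H w))
      = (deriv H w)⁻¹ ^ j * deriv φ (H w) := by
  have hpow : HasDerivAt (fun x => (deriv H x)⁻¹ ^ (j + 1))
      ((j + 1 : ℕ) * (deriv H w)⁻¹ ^ j * (-deriv (deriv H) w / deriv H w ^ 2)) w := by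
    simpa using (hH''.hasDerivAt.inv hH').fun_pow (j + 1)
  have hcomp : HasDerivAt (fun x => φ (H x)) (deriv φ (H w) * deriv H w) w :=
    hφ.hasDerivAt.comp w (differentiableAt_of_deriv_ne_zero hH').hasDerivAt
  rw [(hpow.fun_mul hcomp).deriv, iteratedDeriv_succ, iteratedDeriv_one]
  push_cast
  rw [div_eq_mul_inv, div_eq_mul_inv, sq, mul_inv]
  linear_combination (deriv φ (H w) * (deriv H w)⁻¹ ^ j) * mul_inv_cancel₀ hH'

theorem Mk_inv_deriv_pow_mul_comp {U V : Set ℂ} (hU : IsOpen U) (hV : IsOpen V)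
    {H : ℂ → ℂ} (hH : DifferentiableOn ℂ H U) (hH' : ∀ z ∈ U, deriv H z ≠ 0)
    (hHUV : H '' U ⊆ V) (j : ℕ) {φ : ℂ → ℂ} (hφ : DifferentiableOn ℂ φ V) :
    ∀ z ∈ U, Mk (fun w => iteratedDeriv 2 H w / deriv H w) j
      (fun w => (deriv H w)⁻¹ ^ j * φ (H w)) z = iteratedDeriv j φ (H z) := by
  induction j generalizing φ with
  | zero => simp [Mk]
  | succ j ih =>
    intro z hz
    have hH'' : DifferentiableOn ℂ (deriv H) U := ((hH.analyticOnNhd hU).deriv).differentiableOn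
    have step : Set.EqOn
        (fun w => deriv (fun x => (deriv H x)⁻¹ ^ (j + 1) * φ (H x)) w
          + ((j : ℂ) + 1) * (iteratedDeriv 2 H w / deriv H w) * ((deriv H w)⁻¹ ^ (j + 1) * φ (H w)))
        (fun w => (deriv H w)⁻¹ ^ j * deriv φ (H w)) U := fun w hw =>
      deriv_inv_deriv_pow_mul_comp_add j (hH' w hw) (hH''.differentiableAt (hU.mem_nhds hw))
        (hφ.differentiableAt (hV.mem_nhds (hHUV ⟨w, hw, rfl⟩)))
    rw [Mk, Mk_congr hU j step hz, ih ((hφ.analyticOnNhd hV).deriv.differentiableOn) z hz,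
      iteratedDeriv_succ']

theorem Polynomial.iter_deriv_eval {𝕜 : Type*} [NontriviallyNormedField 𝕜] (p : Polynomial 𝕜)
    (k : ℕ) :
    deriv^[k] (fun x => p.eval x) = fun x => (derivative^[k] p).eval x := by
  induction k generalizing p with
  | zero => rfl
  | succ k ih =>
    have hderiv : _root_.deriv (fun x => p.eval x) = fun x => p.derivative.eval x := by
      ext x; exact p.deriv
    rw [Function.iterate_succ_apply, Function.iterate_succ_apply, hderiv, ih]

theorem iter_deriv_inv_pow {𝕜 : Type*} [NontriviallyNormedField 𝕜] (m k : ℕ) (x : 𝕜) :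
    deriv^[k] (fun y => y⁻¹ ^ m) x
      = (-1) ^ k * (∏ i ∈ Finset.range k, ((m : 𝕜) + i)) * x⁻¹ ^ (m + k) := by
  have hzpow : (fun y : 𝕜 => y⁻¹ ^ m) = fun y => y ^ (-(m : ℤ)) := by
    ext y; rw [zpow_neg, zpow_natCast, inv_pow]
  have hexponent : -(m : ℤ) - k = -((m + k : ℕ) : ℤ) := by push_cast; ring
  rw [hzpow, iter_deriv_zpow, hexponent, zpow_neg, zpow_natCast, ← inv_pow]
  simp only [Int.cast_neg, Int.cast_natCast, ← neg_add', Finset.prod_neg, Finset.card_range]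

theorem Mk_operator_identities_general
    (U : Set ℂ) (hUo : IsOpen U)
    (H : ℂ → ℂ) (hH : DifferentiableOn ℂ H U)
    (hH' : ∀ z ∈ U, deriv H z ≠ 0)
    (k : ℕ) :
    (∀ V : Set ℂ, IsOpen V → H '' U ⊆ V → ∀ φ : ℂ → ℂ, DifferentiableOn ℂ φ V →
        ∀ z ∈ U, Mk (fun w => iteratedDeriv 2 H w / deriv H w) k
            (fun w => (deriv H w)⁻¹ ^ k * φ (H w)) z = iteratedDeriv k φ (H z)) ∧
    (∀ z ∈ U, Mk (fun w => iteratedDeriv 2 H w / deriv H w) k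
        (fun w => (deriv H w)⁻¹ ^ k * Complex.exp (H w)) z = Complex.exp (H z)) ∧
    ((∀ z ∈ U, H z ≠ 0) → ∀ m : ℕ, 1 ≤ m →
        ∀ z ∈ U, Mk (fun w => iteratedDeriv 2 H w / deriv H w) k
            (fun w => (deriv H w)⁻¹ ^ k * (H w)⁻¹ ^ m) z
          = (-1) ^ k * (∏ i ∈ Finset.range k, ((m : ℂ) + (i : ℂ))) * (H z)⁻¹ ^ (m + k)) ∧
    (∀ P : Polynomial ℂ, P.degree < (k : ℕ) →
        ∀ z ∈ U, Mk (fun w => iteratedDeriv 2 H w / deriv H w) k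
            (fun w => (deriv H w)⁻¹ ^ k * P.eval (H w)) z = 0) := by
  have main := fun {V : Set ℂ} (hV : IsOpen V) (hHUV : H '' U ⊆ V) {φ : ℂ → ℂ}
      (hφ : DifferentiableOn ℂ φ V) => Mk_inv_deriv_pow_mul_comp hUo hV hH hH' hHUV k hφ
  refine ⟨fun V hV hHUV φ hφ => main hV hHUV hφ, fun z hz => ?_, fun hH0 m _ z hz => ?_,
    fun P hP z hz => ?_⟩
  · rw [main isOpen_univ (Set.subset_univ _) Complex.differentiable_exp.differentiableOn z hz,
      iteratedDeriv_eq_iterate, Complex.iter_deriv_exp]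
  · have hHU : H '' U ⊆ {0}ᶜ := by rintro _ ⟨w, hw, rfl⟩; exact hH0 w hw
    have hinv : DifferentiableOn ℂ (fun y : ℂ => y⁻¹ ^ m) {0}ᶜ :=
      (differentiableOn_inv.mono fun _ => id).fun_pow m
    rw [main isOpen_compl_singleton hHU hinv z hz, iteratedDeriv_eq_iterate, iter_deriv_inv_pow]
  · rw [main isOpen_univ (Set.subset_univ _) P.differentiableOn z hz, iteratedDeriv_eq_iterate,
      Polynomial.iter_deriv_eval, Polynomial.iterate_derivative_eq_zero_of_degree_lt hP]
    exact Polynomial.eval_zero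

/-- the operator identities of Example I / display (Brurep5): with
`δ = H''/H'` and `M_k = (D + δ)∘⋯∘(D + kδ)`, applying `M_k` to `(H')^{−k} φ(H)`
amounts to differentiating `φ` `k` times with respect to `H`; in particular
`M_k[(H')^{−k}e^H] = e^H`, `M_k[(H')^{−k}H^{−m}] = (−1)^k m(m+1)⋯(m+k−1) H^{−m−k}`,
and `M_k[(H')^{−k}P(H)] = 0` for polynomials `P` of degree at most `k−1`. -/
theorem Mk_operator_identities
    (U : Set ℂ) (hUo : IsOpen U) (hUc : IsConnected U)
    (H : ℂ → ℂ) (hH : DifferentiableOn ℂ H U)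
    (hH' : ∀ z ∈ U, deriv H z ≠ 0)
    (k : ℕ) (hk : 1 ≤ k) :
    (∀ V : Set ℂ, IsOpen V → H '' U ⊆ V → ∀ φ : ℂ → ℂ, DifferentiableOn ℂ φ V →
        ∀ z ∈ U, Mk (fun w => iteratedDeriv 2 H w / deriv H w) k
            (fun w => (deriv H w)⁻¹ ^ k * φ (H w)) z = iteratedDeriv k φ (H z)) ∧
    (∀ z ∈ U, Mk (fun w => iteratedDeriv 2 H w / deriv H w) k
        (fun w => (deriv H w)⁻¹ ^ k * Complex.exp (H w)) z = Complex.exp (H z)) ∧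
    ((∀ z ∈ U, H z ≠ 0) → ∀ m : ℕ, 1 ≤ m →
        ∀ z ∈ U, Mk (fun w => iteratedDeriv 2 H w / deriv H w) k
            (fun w => (deriv H w)⁻¹ ^ k * (H w)⁻¹ ^ m) z
          = (-1) ^ k * (∏ i ∈ Finset.range k, ((m : ℂ) + (i : ℂ))) * (H z)⁻¹ ^ (m + k)) ∧
    (∀ P : Polynomial ℂ, P.degree < (k : ℕ) →
        ∀ z ∈ U, Mk (fun w => iteratedDeriv 2 H w / deriv H w) k
            (fun w => (deriv H w)⁻¹ ^ k * P.eval (H w)) z = 0) :=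
  Mk_operator_identities_general U hUo H hH hH' k
end

section
/- Let k ≥ 2 be an integer and define χ(x) = (x(x+1)(x+2)⋯(x+k−1)) / (x + (k−1)/2)^k for x > 0. Then χ(x) < 1 for every x > 0, and χ is strictly increasing on (0, ∞). -/
open Finset

/-- the arithmetic–geometric mean computation of Proposition 6.1:
for `k ≥ 2`, the function `χ(x) = x(x+1)⋯(x+k−1)/(x+(k−1)/2)^k` satisfies
`χ(x) < 1` for `x > 0` and is strictly increasing on `(0, ∞)`. -/
theorem chi_lt_one_and_strictMono
    (k : ℕ) (hk : 2 ≤ k) :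
    (∀ x : ℝ, 0 < x →
        (∏ i ∈ Finset.range k, (x + (i : ℝ))) / (x + ((k : ℝ) - 1) / 2) ^ k < 1) ∧
    StrictMonoOn
      (fun x : ℝ => (∏ i ∈ Finset.range k, (x + (i : ℝ))) / (x + ((k : ℝ) - 1) / 2) ^ k)
      (Set.Ioi 0) := by
  have hk2 : (2 : ℝ) ≤ (k : ℝ) := by exact_mod_cast hk
  set m : ℝ := ((k : ℝ) - 1) / 2 with hm
  have hm0 : 0 < m := by rw [hm]; linarith
  set χ : ℝ → ℝ := fun x => (∏ i ∈ Finset.range k, (x + (i : ℝ))) / (x + m) ^ k with hχ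
  -- positivity of χ
  have hχpos : ∀ x : ℝ, 0 < x → 0 < χ x := by
    intro x hx
    apply div_pos
    · exact Finset.prod_pos fun i _ => by positivity
    · positivity
  -- the square identity
  have hsq : ∀ x : ℝ, 0 < x →
      (χ x) ^ 2 = ∏ i ∈ range k, (((x + m) ^ 2 - (m - (i : ℝ)) ^ 2) / (x + m) ^ 2) := by
    intro x hx
    have hxm : (0:ℝ) < x + m := by linarith
    have hP2 : (∏ i ∈ range k, (x + (i : ℝ))) ^ 2
        = ∏ i ∈ range k, ((x + m) ^ 2 - (m - (i : ℝ)) ^ 2) := by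
      have h1 : (∏ i ∈ range k, (x + (i : ℝ)))
          = ∏ i ∈ range k, (x + ((k : ℝ) - 1 - (i : ℝ))) := by
        rw [← Finset.prod_range_reflect (fun i => x + (i : ℝ)) k]
        refine Finset.prod_congr rfl fun i hi => ?_
        have hik : i < k := Finset.mem_range.mp hi
        have h2 : k - 1 - i = k - (i + 1) := by omega
        have h3 : i + 1 ≤ k := hik
        simp only [h2, Nat.cast_sub h3]
        push_cast
        ring
      rw [sq]
      nth_rewrite 2 [h1]
      rw [← Finset.prod_mul_distrib]
      refine Finset.prod_congr rfl fun i hi => ?_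
      rw [hm]; ring
    rw [hχ]
    simp only
    rw [div_pow, hP2, Finset.prod_div_distrib, Finset.prod_const, Finset.card_range,
      ← pow_mul, ← pow_mul, Nat.mul_comm]
  -- each factor is positive
  have hfac_pos : ∀ x : ℝ, 0 < x → ∀ i ∈ range k,
      0 < ((x + m) ^ 2 - (m - (i : ℝ)) ^ 2) / (x + m) ^ 2 := by
    intro x hx i hi
    have hik : i < k := Finset.mem_range.mp hi
    have hikR : (i : ℝ) ≤ (k : ℝ) - 1 := by
      have : (i : ℝ) + 1 ≤ (k : ℝ) := by exact_mod_cast hik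
      linarith
    have hxm : (0:ℝ) < x + m := by linarith
    have hnum : 0 < (x + m) ^ 2 - (m - (i : ℝ)) ^ 2 := by
      have hfact : (x + m) ^ 2 - (m - (i : ℝ)) ^ 2
          = (x + (i : ℝ)) * (x + ((k : ℝ) - 1 - (i : ℝ))) := by rw [hm]; ring
      rw [hfact]
      have : (0:ℝ) ≤ (i : ℝ) := Nat.cast_nonneg i
      apply mul_pos <;> linarith
    positivity
  -- each factor ≤ 1
  have hfac_le : ∀ x : ℝ, 0 < x → ∀ i : ℕ,
      ((x + m) ^ 2 - (m - (i : ℝ)) ^ 2) / (x + m) ^ 2 ≤ 1 := by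
    intro x hx i
    have hxm : (0:ℝ) < x + m := by linarith
    rw [div_le_one (by positivity)]
    nlinarith [sq_nonneg (m - (i : ℝ))]
  -- factor at i = 0 is < 1
  have hfac0_lt : ∀ x : ℝ, 0 < x →
      ((x + m) ^ 2 - (m - ((0:ℕ) : ℝ)) ^ 2) / (x + m) ^ 2 < 1 := by
    intro x hx
    have hxm : (0:ℝ) < x + m := by linarith
    rw [div_lt_one (by positivity)]
    simp only [Nat.cast_zero, sub_zero]
    nlinarith
  have h0k : (0 : ℕ) ∈ range k := Finset.mem_range.mpr (by omega)
  -- χ x ^ 2 < 1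
  have hsqlt1 : ∀ x : ℝ, 0 < x → (χ x) ^ 2 < 1 := by
    intro x hx
    rw [hsq x hx]
    calc ∏ i ∈ range k, (((x + m) ^ 2 - (m - (i : ℝ)) ^ 2) / (x + m) ^ 2)
        < ∏ _i ∈ range k, (1 : ℝ) := by
          refine Finset.prod_lt_prod (hfac_pos x hx) (fun i _ => hfac_le x hx i) ?_
          exact ⟨0, h0k, hfac0_lt x hx⟩
      _ = 1 := Finset.prod_const_one
  have part1 : ∀ x : ℝ, 0 < x → χ x < 1 := by
    intro x hx
    have := hsqlt1 x hx
    nlinarith [hχpos x hx]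
  refine ⟨part1, ?_⟩
  intro x hx y hy hxy
  simp only [Set.mem_Ioi] at hx hy
  -- χ x ^ 2 < χ y ^ 2
  have hsqmono : (χ x) ^ 2 < (χ y) ^ 2 := by
    rw [hsq x hx, hsq y hy]
    refine Finset.prod_lt_prod (hfac_pos x hx) ?_ ?_
    · intro i _
      have hxm : (0:ℝ) < x + m := by linarith
      have hym : (0:ℝ) < y + m := by linarith
      rw [div_le_div_iff₀ (by positivity) (by positivity)]
      have key : ((y + m) ^ 2 - (m - (i:ℝ)) ^ 2) * (x + m) ^ 2
          - ((x + m) ^ 2 - (m - (i:ℝ)) ^ 2) * (y + m) ^ 2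
          = (m - (i:ℝ)) ^ 2 * ((y - x) * (x + y + 2 * m)) := by ring
      have h2 : 0 ≤ (m - (i:ℝ)) ^ 2 * ((y - x) * (x + y + 2 * m)) :=
        mul_nonneg (sq_nonneg _)
          (mul_nonneg (by linarith) (by linarith))
      linarith
    · refine ⟨0, h0k, ?_⟩
      have hxm : (0:ℝ) < x + m := by linarith
      have hym : (0:ℝ) < y + m := by linarith
      rw [div_lt_div_iff₀ (by positivity) (by positivity)]
      simp only [Nat.cast_zero, sub_zero]
      have key : ((y + m) ^ 2 - m ^ 2) * (x + m) ^ 2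
          - ((x + m) ^ 2 - m ^ 2) * (y + m) ^ 2
          = m ^ 2 * ((y - x) * (x + y + 2 * m)) := by ring
      have h2 : 0 < m ^ 2 * ((y - x) * (x + y + 2 * m)) :=
        mul_pos (by positivity) (mul_pos (by linarith) (by linarith))
      linarith
  have hχy : 0 < χ y := hχpos y hy
  nlinarith [hχpos x hx]
end

section
/- Let k ≥ 1 be an integer, z₀ ∈ ℂ, and let f be meromorphic at z₀ with a pole of order m ≥ 1 at z₀. Let a₀, …, a_{k−1} be analytic at z₀ and set F = f^{(k)} + a_{k−1}f^{(k−1)} + ⋯ + a₀f. Then (z − z₀)^k·F(z)/f(z) → (−1)^k·m(m+1)⋯(m+k−1) as z → z₀; in particular F has a pole of order m + k at z₀. -/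
/-- `f` has a pole of order `m` at `z₀`: near `z₀` (away from `z₀`) we have
`f = g/(z − z₀)^m` with `g` analytic at `z₀` and `g(z₀) ≠ 0`. -/
def HasPoleOfOrderAt (f : ℂ → ℂ) (z₀ : ℂ) (m : ℕ) : Prop :=
  ∃ g : ℂ → ℂ, AnalyticAt ℂ g z₀ ∧ g z₀ ≠ 0 ∧
    ∀ᶠ z in nhdsWithin z₀ {z₀}ᶜ, f z = g z / (z - z₀) ^ m

open Filter Topology Finset

/-! Writing `f = g / (z - z₀)^m`, every derivative has the form `f^{(j)} = N_j / (z - z₀)^(m + j)`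
with `N_{j+1} = (z - z₀) N_j' - (m + j) N_j` analytic at `z₀`, so that
`N_j(z₀) = (-1)^j m(m+1)⋯(m+j-1) g(z₀)`. Over the common denominator `(z - z₀)^(m + k)` the
lower-order terms `a_j f^{(j)}` acquire a factor `(z - z₀)^(k - j)` and vanish at `z₀`, so `F` has
numerator `Φ` with `Φ(z₀) = N_k(z₀) ≠ 0`. -/

section

variable {𝕜 : Type*} [NontriviallyNormedField 𝕜]

theorem deriv_div_sub_pow {g : 𝕜 → 𝕜} {z₀ z : 𝕜} (hg : DifferentiableAt 𝕜 g z) (hz : z ≠ z₀)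
    (n : ℕ) :
    deriv (fun w => g w / (w - z₀) ^ n) z =
      ((z - z₀) * deriv g z - n * g z) / (z - z₀) ^ (n + 1) := by
  have hsub : z - z₀ ≠ 0 := sub_ne_zero.mpr hz
  have hpow : HasDerivAt (fun w => (w - z₀) ^ n) (n * (z - z₀) ^ (n - 1)) z := by
    simpa using ((hasDerivAt_id z).sub_const z₀).fun_pow n
  rw [(hg.hasDerivAt.fun_div hpow (pow_ne_zero n hsub)).deriv]
  cases n with
  | zero => field_simp; ring
  | succ n => rw [Nat.add_sub_cancel]; field_simp; ring

theorem tendsto_sub_pow_mul_div_of_eventuallyEq {F f Φ g : 𝕜 → 𝕜} {z₀ : 𝕜} {m k : ℕ}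
    (hF : F =ᶠ[𝓝[≠] z₀] fun z => Φ z / (z - z₀) ^ (m + k))
    (hf : f =ᶠ[𝓝[≠] z₀] fun z => g z / (z - z₀) ^ m)
    (hΦ : ContinuousAt Φ z₀) (hg : ContinuousAt g z₀) (hg0 : g z₀ ≠ 0) :
    Tendsto (fun z => (z - z₀) ^ k * F z / f z) (𝓝[≠] z₀) (𝓝 (Φ z₀ / g z₀)) := by
  refine ((hΦ.div hg hg0).tendsto.mono_left nhdsWithin_le_nhds).congr' ?_
  filter_upwards [hF, hf, self_mem_nhdsWithin] with z hFz hfz hz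
  have hsub : z - z₀ ≠ 0 := sub_ne_zero.mpr hz
  rw [Pi.div_apply, hFz, hfz, pow_add]
  by_cases hgz : g z = 0
  · simp [hgz]
  · field_simp

noncomputable def poleDerivNumerator (g : 𝕜 → 𝕜) (z₀ : 𝕜) (m : ℕ) : ℕ → 𝕜 → 𝕜
  | 0 => g
  | j + 1 => fun z => (z - z₀) * deriv (poleDerivNumerator g z₀ m j) z -
      ((m + j : ℕ) : 𝕜) * poleDerivNumerator g z₀ m j z

variable {g : 𝕜 → 𝕜} {z₀ : 𝕜} {m : ℕ}

theorem poleDerivNumerator_apply_self (j : ℕ) :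
    poleDerivNumerator g z₀ m j z₀ = (-1) ^ j * (∏ i ∈ range j, ((m : 𝕜) + i)) * g z₀ := by
  induction j with
  | zero => simp [poleDerivNumerator]
  | succ j ih =>
    simp only [poleDerivNumerator, sub_self, zero_mul, zero_sub, ih, prod_range_succ]
    push_cast
    ring

variable [CompleteSpace 𝕜]

theorem analyticAt_poleDerivNumerator (hg : AnalyticAt 𝕜 g z₀) (j : ℕ) :
    AnalyticAt 𝕜 (poleDerivNumerator g z₀ m j) z₀ := by
  induction j with
  | zero => exact hg
  | succ j ih => simp only [poleDerivNumerator]; fun_prop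

theorem iteratedDeriv_eventuallyEq_poleDerivNumerator {f : 𝕜 → 𝕜}
    (hfg : f =ᶠ[𝓝[≠] z₀] fun z => g z / (z - z₀) ^ m) (hg : AnalyticAt 𝕜 g z₀) (j : ℕ) :
    iteratedDeriv j f =ᶠ[𝓝[≠] z₀] fun z => poleDerivNumerator g z₀ m j z / (z - z₀) ^ (m + j) := by
  induction j with
  | zero => simpa [poleDerivNumerator] using hfg
  | succ j ih =>
    rw [iteratedDeriv_succ]
    have hN := (analyticAt_poleDerivNumerator (m := m) hg j).eventually_analyticAt
    filter_upwards [ih.nhdsNE_deriv, nhdsWithin_le_nhds hN, self_mem_nhdsWithin]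
      with z hz hNz hzz₀
    rw [hz, deriv_div_sub_pow hNz.differentiableAt hzz₀, poleDerivNumerator, add_assoc]

theorem eventuallyEq_linearDiffPoly_div_sub_pow {f : 𝕜 → 𝕜} {a : ℕ → 𝕜 → 𝕜} {k : ℕ}
    (hfg : f =ᶠ[𝓝[≠] z₀] fun z => g z / (z - z₀) ^ m) (hg : AnalyticAt 𝕜 g z₀)
    (ha : ∀ j < k, AnalyticAt 𝕜 (a j) z₀) :
    ∃ Φ : 𝕜 → 𝕜, AnalyticAt 𝕜 Φ z₀ ∧ Φ z₀ = poleDerivNumerator g z₀ m k z₀ ∧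
      (fun z => iteratedDeriv k f z + ∑ j ∈ range k, a j z * iteratedDeriv j f z) =ᶠ[𝓝[≠] z₀]
        fun z => Φ z / (z - z₀) ^ (m + k) := by
  set N := poleDerivNumerator g z₀ m
  refine ⟨fun z => N k z + ∑ j ∈ range k, a j z * N j z * (z - z₀) ^ (k - j), ?_, ?_, ?_⟩
  · have := analyticAt_poleDerivNumerator (m := m) hg
    refine (this k).add (Finset.analyticAt_fun_sum _ fun j hj => ?_)
    exact ((ha j (mem_range.mp hj)).mul (this j)).mul (by fun_prop)
  · refine add_eq_left.mpr (sum_eq_zero fun j hj => ?_)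
    simp [zero_pow (Nat.sub_ne_zero_of_lt (mem_range.mp hj))]
  · have hN : ∀ᶠ z in 𝓝[≠] z₀, ∀ j ∈ range (k + 1),
        iteratedDeriv j f z = N j z / (z - z₀) ^ (m + j) :=
      (eventually_all_finset _).mpr fun j _ =>
        iteratedDeriv_eventuallyEq_poleDerivNumerator hfg hg j
    filter_upwards [hN, self_mem_nhdsWithin] with z hz hzz₀
    have hsub : z - z₀ ≠ 0 := sub_ne_zero.mpr hzz₀
    rw [hz k (self_mem_range_succ k), add_div, sum_div]
    refine congrArg _ (sum_congr rfl fun j hj => ?_)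
    have hjk := mem_range.mp hj
    rw [hz j (mem_range.mpr (by omega)), show m + k = m + j + (k - j) by omega,
      pow_add (z - z₀) (m + j)]
    field_simp

end

theorem leading_laurent_coefficient_of_linear_differential_polynomial_general
    (k : ℕ) (z₀ : ℂ) (f : ℂ → ℂ) (m : ℕ) (hm : 1 ≤ m)
    (hf : HasPoleOfOrderAt f z₀ m)
    (a : ℕ → ℂ → ℂ) (ha : ∀ j, j < k → AnalyticAt ℂ (a j) z₀) :
    Filter.Tendsto
      (fun z : ℂ => (z - z₀) ^ k *
        (iteratedDeriv k f z + ∑ j ∈ Finset.range k, a j z * iteratedDeriv j f z) / f z)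
      (nhdsWithin z₀ {z₀}ᶜ)
      (nhds ((-1) ^ k * ∏ i ∈ Finset.range k, ((m : ℂ) + (i : ℂ)))) ∧
    HasPoleOfOrderAt
      (fun z : ℂ => iteratedDeriv k f z + ∑ j ∈ Finset.range k, a j z * iteratedDeriv j f z)
      z₀ (m + k) := by
  obtain ⟨g, hg, hg0, hfg⟩ := hf
  obtain ⟨Φ, hΦ, hΦz₀, hF⟩ := eventuallyEq_linearDiffPoly_div_sub_pow hfg hg ha
  rw [poleDerivNumerator_apply_self] at hΦz₀
  have hc : (-1) ^ k * ∏ i ∈ range k, ((m : ℂ) + i) ≠ 0 :=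
    mul_ne_zero (by simp) (prod_ne_zero_iff.mpr fun i _ => by norm_cast; omega)
  refine ⟨?_, Φ, hΦ, hΦz₀ ▸ mul_ne_zero hc hg0, hF⟩
  simpa [hΦz₀, hg0] using
    tendsto_sub_pow_mul_div_of_eventuallyEq hF hfg hΦ.continuousAt hg.continuousAt hg0

/-- display (ac7): if `f` has a pole of order `m` at `z₀` and the
`a_j` are analytic at `z₀`, then with
`F = f^{(k)} + a_{k−1}f^{(k−1)} + ⋯ + a₀f` one has
`(z − z₀)^k F/f → (−1)^k m(m+1)⋯(m+k−1)` as `z → z₀`, and `F` has a pole of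
order `m + k` at `z₀`. -/
theorem leading_laurent_coefficient_of_linear_differential_polynomial
    (k : ℕ) (hk : 1 ≤ k) (z₀ : ℂ) (f : ℂ → ℂ) (m : ℕ) (hm : 1 ≤ m)
    (hf : HasPoleOfOrderAt f z₀ m)
    (a : ℕ → ℂ → ℂ) (ha : ∀ j, j < k → AnalyticAt ℂ (a j) z₀) :
    Filter.Tendsto
      (fun z : ℂ => (z - z₀) ^ k *
        (iteratedDeriv k f z + ∑ j ∈ Finset.range k, a j z * iteratedDeriv j f z) / f z)
      (nhdsWithin z₀ {z₀}ᶜ)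
      (nhds ((-1) ^ k * ∏ i ∈ Finset.range k, ((m : ℂ) + (i : ℂ)))) ∧
    HasPoleOfOrderAt
      (fun z : ℂ => iteratedDeriv k f z + ∑ j ∈ Finset.range k, a j z * iteratedDeriv j f z)
      z₀ (m + k) :=
  leading_laurent_coefficient_of_linear_differential_polynomial_general k z₀ f m hm hf a ha
end

section
/- Let κ₁, κ₂, κ₃ be pairwise distinct polynomials with complex coefficients, each with zero constant term. For a polynomial p and θ ∈ ℝ, write p ≺ 0 on the ray arg z = θ if Re p(re^{iθ}) < 0 for all sufficiently large r > 0, and 0 ≺ p if Re p(re^{iθ}) > 0 for all sufficiently large r; write p ≺ q if q − p satisfies 0 ≺ q − p. Assume there is NO θ ∈ ℝ such that κ₁ ≺ 0, κ₂ ≺ 0 and κ₃ ≺ 0 simultaneously on the ray arg z = θ. Then, after relabelling κ₁, κ₂, κ₃ by a permutation, there exists θ ∈ ℝ such that on the ray arg z = θ one of the following holds: (A) κ₁ ≺ κ₂ ≺ 0 ≺ κ₃; or (B) κ₁ ≺ κ₂ ≺ 0 and κ₃ is the zero polynomial; or (C) κ₁ ≺ 0 ≺ κ₃ and κ₂ is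 the zero polynomial. -/
/-!
A polynomial `p` with leading term `c zⁿ`, `n ≥ 1`, satisfies
`Re p(r e^{iθ}) ~ |c| rⁿ cos (n θ + arg c)`, so on every ray off the countably many zeros of this
cosine either `p ≺ 0` or `-p ≺ 0`. The set where `cos (n θ + φ) < 0` fills exactly half of
`(0, 2π]` (the shift by `π / n` swaps it with its complement), so of three such sets two meet.
If one `κᵢ` vanishes, a generic ray on which one of the other two is `≺ 0` does the job. Otherwise
take a generic ray on which two of them are `≺ 0`: the third is then `≻ 0` by hypothesis, and the
sign of the difference of the first two orders them.
-/

/-- `p ≺ 0` on the ray `arg z = θ`: the real part of `p(re^{iθ})` is negative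
for all sufficiently large `r`. -/
def NegOnRay (p : Polynomial ℂ) (θ : ℝ) : Prop :=
  ∃ R : ℝ, ∀ r : ℝ, R ≤ r →
    (Polynomial.eval ((r : ℂ) * Complex.exp (θ * Complex.I)) p).re < 0

open Real Set Filter MeasureTheory Polynomial Function

theorem countable_setOf_cos_mul_add_eq_zero {n : ℕ} (hn : n ≠ 0) (φ : ℝ) :
    {θ : ℝ | cos (n * θ + φ) = 0}.Countable := by
  refine (countable_range fun k : ℤ => ((2 * k + 1) * π / 2 - φ) / n).mono fun θ hθ => ?_
  obtain ⟨k, hk⟩ := cos_eq_zero_iff.mp hθ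
  exact ⟨k, by field_simp; linarith⟩

theorem Function.Periodic.intervalIntegral_eq_half_of_add_shift_eq_one {g : ℝ → ℝ} {T : ℝ}
    (c : ℝ) (hper : Periodic g T) (hg : ∀ a b, IntervalIntegrable g volume a b)
    (hsum : ∀ᵐ θ, g θ + g (θ + c) = 1) :
    ∫ θ in (0)..T, g θ = T / 2 := by
  have hshift : ∫ θ in (0)..T, g (θ + c) = ∫ θ in (0)..T, g θ := by
    rw [intervalIntegral.integral_comp_add_right, zero_add, add_comm,
      hper.intervalIntegral_add_eq c 0, zero_add]
  have htotal : ∫ θ in (0)..T, (g θ + g (θ + c)) = T := by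
    rw [intervalIntegral.integral_congr_ae (hsum.mono fun θ h _ => h)]
    simp
  have hgc : IntervalIntegrable (fun θ => g (θ + c)) volume 0 T := by
    simpa using (hg c (T + c)).comp_add_right c
  rw [intervalIntegral.integral_add (hg 0 T) hgc, hshift] at htotal
  linarith

theorem integral_indicator_setOf_cos_mul_add_neg {n : ℕ} (hn : n ≠ 0) (φ : ℝ) :
    ∫ θ in (0)..(2 * π), {θ : ℝ | cos (n * θ + φ) < 0}.indicator 1 θ = π := by
  have hmeas : MeasurableSet {θ : ℝ | cos (n * θ + φ) < 0} :=
    (isOpen_lt (by fun_prop) continuous_const).measurableSet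
  have hper :
      Periodic ({θ : ℝ | cos (n * θ + φ) < 0}.indicator (1 : ℝ → ℝ)) (2 * π) := fun θ => by
    have : cos (n * (θ + 2 * π) + φ) = cos (n * θ + φ) := by
      rw [show n * (θ + 2 * π) + φ = n * θ + φ + n * (2 * π) by ring, cos_add_nat_mul_two_pi]
    simp [Set.indicator_apply, this]
  have hsum : ∀ᵐ θ, {θ : ℝ | cos (n * θ + φ) < 0}.indicator 1 θ
      + {θ : ℝ | cos (n * θ + φ) < 0}.indicator (1 : ℝ → ℝ) (θ + π / n) = 1 := by
    filter_upwards [measure_eq_zero_iff_ae_notMem.mp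
      ((countable_setOf_cos_mul_add_eq_zero hn φ).measure_zero volume)] with θ hθ
    have hcos : cos (n * (θ + π / n) + φ) = -cos (n * θ + φ) := by
      rw [show n * (θ + π / n) + φ = n * θ + φ + π by field_simp; ring, cos_add_pi]
    have hne : cos (n * θ + φ) ≠ 0 := hθ
    simp only [Set.indicator_apply, Set.mem_ofPred_eq, hcos, Pi.one_apply]
    rcases hne.lt_or_gt with h | h
    · simp [h, h.le]
    · simp [h, not_lt.mpr h.le]
  have hint : ∀ a b, IntervalIntegrable
      ({θ : ℝ | cos (n * θ + φ) < 0}.indicator (1 : ℝ → ℝ)) volume a b := fun _ _ =>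
    (intervalIntegrable_const (c := (1 : ℝ))).mono_fun
      (measurable_const.indicator hmeas).aestronglyMeasurable
      (Eventually.of_forall (norm_indicator_le_norm_self 1))
  rw [hper.intervalIntegral_eq_half_of_add_shift_eq_one (π / n) hint hsum]
  ring

theorem exists_ne_and_cos_mul_add_neg {ι : Type*} [Fintype ι] (hι : 2 < Fintype.card ι)
    (n : ι → ℕ) (hn : ∀ i, n i ≠ 0) (φ : ι → ℝ) :
    ∃ i j, i ≠ j ∧ ∃ θ, cos (n i * θ + φ i) < 0 ∧ cos (n j * θ + φ j) < 0 := by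
  have hmeas : ∀ i, MeasurableSet {θ : ℝ | cos (n i * θ + φ i) < 0} := fun i =>
    (isOpen_lt (by fun_prop) continuous_const).measurableSet
  have hhalf : ∀ i,
      (volume.restrict (Ioc 0 (2 * π))).real {θ : ℝ | cos (n i * θ + φ i) < 0} = π :=
    fun i => by
      rw [← integral_indicator_one (hmeas i), ← intervalIntegral.integral_of_le (by positivity),
        integral_indicator_setOf_cos_mul_add_neg (hn i)]
  obtain ⟨i, -, j, -, hij, θ, hθ⟩ := exists_nonempty_inter_of_measureReal_univ_lt_sum_measureReal
    (μ := volume.restrict (Ioc 0 (2 * π))) (s := Finset.univ) (fun i _ => hmeas i) <| by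
    have : (3 : ℝ) ≤ Fintype.card ι := by exact_mod_cast hι
    simp only [hhalf, Finset.sum_const, Finset.card_univ, nsmul_eq_mul,
      measureReal_restrict_apply_univ, Real.volume_real_Ioc, sub_zero, max_eq_left two_pi_pos.le]
    nlinarith [pi_pos]
  exact ⟨i, j, hij, θ, hθ⟩

namespace Polynomial

theorem natDegree_pos_of_coeff_zero_eq_zero {R : Type*} [Semiring R] {p : R[X]} (hp : p ≠ 0)
    (h0 : p.coeff 0 = 0) : 0 < p.natDegree :=
  Nat.pos_of_ne_zero fun h => hp (by rw [eq_C_of_natDegree_eq_zero h, h0, C_0])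

theorem natDegree_sub_pos_of_coeff_zero_eq_zero {R : Type*} [Ring R] {p q : R[X]} (hpq : p ≠ q)
    (hp : p.coeff 0 = 0) (hq : q.coeff 0 = 0) : 0 < (p - q).natDegree :=
  natDegree_pos_of_coeff_zero_eq_zero (sub_ne_zero.mpr hpq) (by rw [coeff_sub, hp, hq, sub_zero])

noncomputable def reOnRay (p : ℂ[X]) (ω : ℂ) : ℝ[X] :=
  ∑ k ∈ Finset.range (p.natDegree + 1), C (p.coeff k * ω ^ k).re * X ^ k

theorem eval_reOnRay (p : ℂ[X]) (ω : ℂ) (r : ℝ) :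
    (p.reOnRay ω).eval r = (p.eval (r * ω)).re := by
  rw [reOnRay, eval_finsetSum, eval_eq_sum_range, Complex.re_sum]
  refine Finset.sum_congr rfl fun k _ => ?_
  rw [eval_mul, eval_C, eval_pow, eval_X, mul_pow, ← Complex.ofReal_pow,
    show p.coeff k * (↑(r ^ k) * ω ^ k) = ↑(r ^ k) * (p.coeff k * ω ^ k) by ring,
    Complex.re_ofReal_mul, mul_comm]

theorem coeff_reOnRay (p : ℂ[X]) (ω : ℂ) (k : ℕ) :
    (p.reOnRay ω).coeff k = (p.coeff k * ω ^ k).re := by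
  simp only [reOnRay, finsetSum_coeff, coeff_C_mul_X_pow, Finset.sum_ite_eq, Finset.mem_range]
  split_ifs with hk
  · rfl
  · rw [coeff_eq_zero_of_natDegree_lt (by omega), zero_mul, Complex.zero_re]

theorem natDegree_reOnRay {p : ℂ[X]} {ω : ℂ} (h : (p.leadingCoeff * ω ^ p.natDegree).re ≠ 0) :
    (p.reOnRay ω).natDegree = p.natDegree :=
  natDegree_eq_of_le_of_coeff_ne_zero
    (natDegree_le_iff_coeff_eq_zero.mpr fun k hk => by
      rw [coeff_reOnRay, coeff_eq_zero_of_natDegree_lt (by exact_mod_cast hk), zero_mul,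
        Complex.zero_re])
    (by rwa [coeff_reOnRay])

open Complex in
theorem negOnRay_of_re_leadingCoeff_mul_neg {p : ℂ[X]} (hp : 0 < p.natDegree) {θ : ℝ}
    (h : (p.leadingCoeff * exp (θ * I) ^ p.natDegree).re < 0) : NegOnRay p θ := by
  have hdeg := natDegree_reOnRay h.ne
  have hlead : (p.reOnRay (exp (θ * I))).leadingCoeff < 0 := by
    rwa [leadingCoeff, hdeg, coeff_reOnRay]
  obtain ⟨R, hR⟩ := eventually_atTop.mp <|
    (tendsto_atBot_of_leadingCoeff_nonpos _ (natDegree_pos_iff_degree_pos.mp (hdeg ▸ hp))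
      hlead.le).eventually (eventually_lt_atBot 0)
  exact ⟨R, fun r hr => eval_reOnRay p _ r ▸ hR r hr⟩

end Polynomial

open Complex in
theorem Complex.re_mul_exp_mul_I_pow (c : ℂ) (n : ℕ) (θ : ℝ) :
    (c * exp (θ * I) ^ n).re = ‖c‖ * Real.cos (n * θ + arg c) := by
  conv_lhs => rw [← norm_mul_exp_arg_mul_I c, ← exp_nat_mul, mul_assoc, ← exp_add,
    show arg c * I + n * (θ * I) = ((n * θ + arg c : ℝ) : ℂ) * I by push_cast; ring]
  rw [re_ofReal_mul, exp_ofReal_mul_I_re]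

/-- The sign of `Re p(r e^{iθ})` for large `r`, when it is not zero. -/
noncomputable def leadingCos (p : ℂ[X]) (θ : ℝ) : ℝ :=
  cos (p.natDegree * θ + Complex.arg p.leadingCoeff)

section leadingCos

variable {p : ℂ[X]}

theorem negOnRay_of_leadingCos_neg (hp : 0 < p.natDegree) {θ : ℝ} (h : leadingCos p θ < 0) :
    NegOnRay p θ := by
  refine negOnRay_of_re_leadingCoeff_mul_neg hp ?_
  rw [Complex.re_mul_exp_mul_I_pow]
  exact mul_neg_of_pos_of_neg
    (norm_pos_iff.mpr (leadingCoeff_ne_zero.mpr (ne_zero_of_natDegree_gt hp))) h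

theorem negOnRay_neg_of_leadingCos_pos (hp : 0 < p.natDegree) {θ : ℝ} (h : 0 < leadingCos p θ) :
    NegOnRay (-p) θ := by
  refine negOnRay_of_re_leadingCoeff_mul_neg (by rwa [natDegree_neg]) ?_
  rw [natDegree_neg, leadingCoeff_neg, neg_mul, Complex.neg_re, Complex.re_mul_exp_mul_I_pow,
    neg_neg_iff_pos]
  exact mul_pos (norm_pos_iff.mpr (leadingCoeff_ne_zero.mpr (ne_zero_of_natDegree_gt hp))) h

theorem negOnRay_or_negOnRay_neg (hp : 0 < p.natDegree) {θ : ℝ} (h : leadingCos p θ ≠ 0) :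
    NegOnRay p θ ∨ NegOnRay (-p) θ :=
  h.lt_or_gt.imp (negOnRay_of_leadingCos_neg hp) (negOnRay_neg_of_leadingCos_pos hp)

theorem continuous_leadingCos (p : ℂ[X]) : Continuous (leadingCos p) := by
  unfold leadingCos; fun_prop

theorem exists_leadingCos_neg (hp : 0 < p.natDegree) : ∃ θ, leadingCos p θ < 0 :=
  ⟨(π - Complex.arg p.leadingCoeff) / p.natDegree, by
    rw [leadingCos, mul_div_cancel₀ _ (by positivity), sub_add_cancel, cos_pi]; norm_num⟩

theorem exists_mem_forall_leadingCos_ne_zero {U : Set ℝ} (hU : IsOpen U) (hne : U.Nonempty)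
    (s : Finset ℂ[X]) (hs : ∀ p ∈ s, 0 < p.natDegree) :
    ∃ θ ∈ U, ∀ p ∈ s, leadingCos p θ ≠ 0 := by
  have hZ : (⋃ p ∈ s, {θ | leadingCos p θ = 0}).Countable :=
    s.countable_toSet.biUnion fun p hp => countable_setOf_cos_mul_add_eq_zero (hs p hp).ne' _
  obtain ⟨θ, hθU, hθZ⟩ := (hZ.dense_compl ℝ).inter_open_nonempty U hU hne
  exact ⟨θ, hθU, fun p hp h => hθZ (mem_biUnion hp h)⟩

end leadingCos

theorem Fin.exists_perm_apply_zero_apply_one {i j : Fin 3} (hij : i ≠ j) :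
    ∃ τ : Equiv.Perm (Fin 3), τ 0 = i ∧ τ 1 = j := by
  revert i j
  decide

/-- The alternatives (A), (B), (C) for the labelled triple `(a, b, c)` on the ray `arg z = θ`. -/
def TrichotomyOnRay (a b c : ℂ[X]) (θ : ℝ) : Prop :=
  (NegOnRay (a - b) θ ∧ NegOnRay b θ ∧ NegOnRay (-c) θ) ∨
    (NegOnRay (a - b) θ ∧ NegOnRay b θ ∧ c = 0) ∨
    (NegOnRay a θ ∧ NegOnRay (-c) θ ∧ b = 0)

def HasTrichotomyRay (f : Fin 3 → ℂ[X]) : Prop :=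
  ∃ σ : Equiv.Perm (Fin 3), ∃ θ, TrichotomyOnRay (f (σ 0)) (f (σ 1)) (f (σ 2)) θ

namespace HasTrichotomyRay

variable {f : Fin 3 → ℂ[X]}

theorem of_comp (τ : Equiv.Perm (Fin 3)) (h : HasTrichotomyRay (f ∘ τ)) : HasTrichotomyRay f :=
  let ⟨σ, θ, h⟩ := h
  ⟨τ * σ, θ, h⟩

theorem of_negOnRay {θ : ℝ} (h0 : NegOnRay (f 0) θ) (h1 : NegOnRay (f 1) θ)
    (h01 : 0 < (f 0 - f 1).natDegree) (hθ : leadingCos (f 0 - f 1) θ ≠ 0)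
    (h2 : NegOnRay (-f 2) θ ∨ f 2 = 0) : HasTrichotomyRay f := by
  rcases negOnRay_or_negOnRay_neg h01 hθ with h | h
  · exact ⟨1, θ, h2.elim (fun h2 => .inl ⟨h, h1, h2⟩) fun h2 => .inr (.inl ⟨h, h1, h2⟩)⟩
  · rw [neg_sub] at h
    exact ⟨.swap 0 1, θ, h2.elim (fun h2 => .inl ⟨h, h0, h2⟩) fun h2 => .inr (.inl ⟨h, h0, h2⟩)⟩

theorem of_two_eq_zero (hf : Injective f) (hf0 : ∀ i, (f i).coeff 0 = 0) (h2 : f 2 = 0) :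
    HasTrichotomyRay f := by
  have hdeg0 := natDegree_pos_of_coeff_zero_eq_zero (h2 ▸ hf.ne (by decide)) (hf0 0)
  have hdeg1 := natDegree_pos_of_coeff_zero_eq_zero (h2 ▸ hf.ne (by decide)) (hf0 1)
  have hdeg01 := natDegree_sub_pos_of_coeff_zero_eq_zero (hf.ne (by decide)) (hf0 0) (hf0 1)
  obtain ⟨θ, hθ1, hθ⟩ := exists_mem_forall_leadingCos_ne_zero
    (isOpen_lt (continuous_leadingCos _) continuous_const) (exists_leadingCos_neg hdeg1)
    {f 0, f 0 - f 1} (by simp [hdeg0, hdeg01])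
  have h1 := negOnRay_of_leadingCos_neg hdeg1 hθ1
  rcases negOnRay_or_negOnRay_neg hdeg0 (hθ _ (by simp)) with h0 | h0
  · exact of_negOnRay h0 h1 hdeg01 (hθ _ (by simp)) (.inr h2)
  · exact ⟨finRotate 3, θ, .inr (.inr ⟨h1, h0, h2⟩)⟩

theorem of_leadingCos_neg (hf : Injective f) (hf0 : ∀ i, (f i).coeff 0 = 0)
    (hdeg : ∀ i, 0 < (f i).natDegree) (hno : ¬ ∃ θ, ∀ i, NegOnRay (f i) θ)
    (hpair : ∃ θ, leadingCos (f 0) θ < 0 ∧ leadingCos (f 1) θ < 0) : HasTrichotomyRay f := by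
  have hdeg01 := natDegree_sub_pos_of_coeff_zero_eq_zero (hf.ne (by decide)) (hf0 0) (hf0 1)
  obtain ⟨θ, ⟨hθ0, hθ1⟩, hθ⟩ := exists_mem_forall_leadingCos_ne_zero
    ((isOpen_lt (continuous_leadingCos _) continuous_const).inter
      (isOpen_lt (continuous_leadingCos _) continuous_const)) hpair
    {f 2, f 0 - f 1} (by simp [hdeg, hdeg01])
  have h0 := negOnRay_of_leadingCos_neg (hdeg 0) hθ0
  have h1 := negOnRay_of_leadingCos_neg (hdeg 1) hθ1
  refine of_negOnRay h0 h1 hdeg01 (hθ _ (by simp)) (.inl ?_)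
  refine (negOnRay_or_negOnRay_neg (hdeg 2) (hθ _ (by simp))).resolve_left fun h2 => hno ⟨θ, ?_⟩
  intro i
  fin_cases i <;> assumption

theorem of_injective (hf : Injective f) (hf0 : ∀ i, (f i).coeff 0 = 0)
    (hno : ¬ ∃ θ, ∀ i, NegOnRay (f i) θ) : HasTrichotomyRay f := by
  by_cases hz : ∃ i, f i = 0
  · obtain ⟨i, hi⟩ := hz
    exact of_comp (.swap i 2) <|
      of_two_eq_zero (hf.comp (Equiv.injective _)) (fun _ => hf0 _) (by simpa using hi)
  have hdeg i := natDegree_pos_of_coeff_zero_eq_zero (not_exists.mp hz i) (hf0 i)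
  obtain ⟨i, j, hij, hpair⟩ := exists_ne_and_cos_mul_add_neg (by simp) _ (fun i => (hdeg i).ne')
    (fun i => Complex.arg (f i).leadingCoeff)
  obtain ⟨τ, rfl, rfl⟩ := Fin.exists_perm_apply_zero_apply_one hij
  exact of_comp τ <| of_leadingCos_neg (hf.comp τ.injective) (fun _ => hf0 _) (fun _ => hdeg _)
    (fun ⟨θ, h⟩ => hno ⟨θ, fun i => by simpa using h (τ.symm i)⟩) hpair

end HasTrichotomyRay

/-- Lemma 11.2: for pairwise distinct polynomials `κ₁, κ₂, κ₃`
with zero constant term such that no ray has `κ₁ ≺ 0`, `κ₂ ≺ 0`, `κ₃ ≺ 0`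
simultaneously, after relabelling there is a ray `arg z = θ` on which
(A) `κ₁ ≺ κ₂ ≺ 0 ≺ κ₃`, or (B) `κ₁ ≺ κ₂ ≺ 0` and `κ₃ = 0`, or
(C) `κ₁ ≺ 0 ≺ κ₃` and `κ₂ = 0`. -/
theorem exponential_parts_trichotomy
    (κ₁ κ₂ κ₃ : Polynomial ℂ)
    (h12 : κ₁ ≠ κ₂) (h13 : κ₁ ≠ κ₃) (h23 : κ₂ ≠ κ₃)
    (hc1 : κ₁.coeff 0 = 0) (hc2 : κ₂.coeff 0 = 0) (hc3 : κ₃.coeff 0 = 0)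
    (hno : ¬ ∃ θ : ℝ, NegOnRay κ₁ θ ∧ NegOnRay κ₂ θ ∧ NegOnRay κ₃ θ) :
    ∃ σ : Equiv.Perm (Fin 3), ∃ θ : ℝ,
      (NegOnRay (![κ₁, κ₂, κ₃] (σ 0) - ![κ₁, κ₂, κ₃] (σ 1)) θ ∧
        NegOnRay (![κ₁, κ₂, κ₃] (σ 1)) θ ∧
        NegOnRay (-(![κ₁, κ₂, κ₃] (σ 2))) θ) ∨
      (NegOnRay (![κ₁, κ₂, κ₃] (σ 0) - ![κ₁, κ₂, κ₃] (σ 1)) θ ∧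
        NegOnRay (![κ₁, κ₂, κ₃] (σ 1)) θ ∧
        ![κ₁, κ₂, κ₃] (σ 2) = 0) ∨
      (NegOnRay (![κ₁, κ₂, κ₃] (σ 0)) θ ∧
        NegOnRay (-(![κ₁, κ₂, κ₃] (σ 2))) θ ∧
        ![κ₁, κ₂, κ₃] (σ 1) = 0) := by
  have hinj : Injective ![κ₁, κ₂, κ₃] := by
    intro i j h
    fin_cases i <;> fin_cases j <;> simp_all [eq_comm]
  exact HasTrichotomyRay.of_injective hinj (fun i => by fin_cases i <;> assumption)
    fun ⟨θ, h⟩ => hno ⟨θ, h 0, h 1, h 2⟩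
end

section
/- Let k ∈ ℕ, let U ⊆ ℂ be a domain, and let φ, G, f₁, …, f_k be analytic on U with φ zero-free on U. For analytic functions h₁, …, h_n on U let W(h₁, …, h_n) denote the Wronskian determinant det(h_j^{(i−1)})_{1≤i,j≤n}. Set Ψ = −(φ′/φ)·G. Then W(f₁′G + f₁Ψ, …, f_k′G + f_kΨ) = G^k·φ^{−1}·W(φ, f₁, …, f_k) on U. -/
/-!
Put `qⱼ = fⱼ / φ`. Then `fⱼ'G + fⱼΨ = Gφ qⱼ'` and `fⱼ = φ qⱼ`, so both sides are Wronskians of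
families with a common factor. By the Leibniz rule the Wronskian matrix of `(u hⱼ)ⱼ` is a lower
triangular matrix with diagonal `u` times that of `(hⱼ)ⱼ`, so `W(u h) = uⁿ W(h)`. Hence the left
side is `(Gφ)^k W(q₁', …, q_k')` and `W(φ, f) = φ^{k+1} W(1, q₁, …, q_k) = φ^{k+1} W(q₁', …, q_k')`,
the last step by expanding along the first column.
-/

/-- The Wronskian determinant `W(h₁, …, h_n) = det(h_j^{(i−1)})` of `n` functions. -/
noncomputable def Wronskian (n : ℕ) (h : Fin n → ℂ → ℂ) (z : ℂ) : ℂ :=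
  Matrix.det (Matrix.of fun i j : Fin n => iteratedDeriv (i : ℕ) (h j) z)

open Filter Topology

lemma deriv_sub_mul_deriv_div_eq_mul_deriv_div {f φ : ℂ → ℂ} {w : ℂ}
    (hf : DifferentiableAt ℂ f w) (hφ : DifferentiableAt ℂ φ w) (hφw : φ w ≠ 0) :
    deriv f w - f w * (deriv φ w / φ w) = φ w * deriv (fun x => f x / φ x) w := by
  rw [deriv_fun_div hf hφ hφw]
  field_simp

lemma wronskian_congr {n : ℕ} {h h' : Fin n → ℂ → ℂ} {z : ℂ} (hh : ∀ j, h j =ᶠ[𝓝 z] h' j) :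
    Wronskian n h z = Wronskian n h' z := by
  unfold Wronskian
  congr 1
  ext i j
  exact (hh j).iteratedDeriv_eq i

lemma wronskian_mul_left {n : ℕ} {u : ℂ → ℂ} {h : Fin n → ℂ → ℂ} {z : ℂ}
    (hu : ContDiffAt ℂ n u z) (hh : ∀ j, ContDiffAt ℂ n (h j) z) :
    Wronskian n (fun j w => u w * h j w) z = u z ^ n * Wronskian n h z := by
  let L : Matrix (Fin n) (Fin n) ℂ :=
    Matrix.of fun i m => ((i : ℕ).choose m : ℂ) * iteratedDeriv (i - m) u z
  have hL_tri : L.BlockTriangular OrderDual.toDual := fun i m him => by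
    simp [L, Nat.choose_eq_zero_of_lt (show (i : ℕ) < m from him)]
  have hL_det : L.det = u z ^ n := by
    simp [Matrix.det_of_isLowerTriangular L hL_tri, L]
  have hfactor : (Matrix.of fun i j : Fin n => iteratedDeriv i (fun w => u w * h j w) z)
      = L * Matrix.of fun m j : Fin n => iteratedDeriv m (h j) z := by
    ext i j
    have hle : (i : ℕ) ≤ n := i.isLt.le
    simp_rw [mul_comm (u _)]
    rw [Matrix.of_apply, iteratedDeriv_fun_mul ((hh j).of_le (by exact_mod_cast hle))
      (hu.of_le (by exact_mod_cast hle)), Matrix.mul_apply]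
    simp only [L, Matrix.of_apply]
    rw [Fin.sum_univ_eq_sum_range
      (fun m => ((i : ℕ).choose m : ℂ) * iteratedDeriv (i - m) u z * iteratedDeriv m (h j) z)]
    refine (Finset.sum_subset (Finset.range_subset_range.mpr i.isLt) fun m _ hm => ?_).trans
      (Finset.sum_congr rfl fun m _ => by ring)
    simp [Nat.choose_eq_zero_of_lt (show (i : ℕ) < m by simp at hm; omega)]
  unfold Wronskian
  rw [hfactor, Matrix.det_mul, hL_det]

lemma wronskian_cons_one (k : ℕ) (q : Fin k → ℂ → ℂ) (z : ℂ) :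
    Wronskian (k + 1) (Fin.cons (fun _ => 1) q) z = Wronskian k (fun j => deriv (q j)) z := by
  unfold Wronskian
  rw [Matrix.det_succ_column_zero, Finset.sum_eq_single 0]
  · simp only [Fin.val_zero, pow_zero, one_mul, Matrix.of_apply, Fin.cons_zero,
      iteratedDeriv_zero]
    congr 1
    ext i j
    simp [iteratedDeriv_succ']
  · intro i _ hi
    simp [iteratedDeriv_const, Fin.val_ne_zero_iff.mpr hi]
  · simp

theorem wronskian_identity_frank_general
    (k : ℕ) (U : Set ℂ) (hUo : IsOpen U)
    (φ G : ℂ → ℂ) (f : Fin k → ℂ → ℂ)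
    (hφ : AnalyticOnNhd ℂ φ U) (hG : AnalyticOnNhd ℂ G U)
    (hf : ∀ j, AnalyticOnNhd ℂ (f j) U)
    (hφzf : ∀ z ∈ U, φ z ≠ 0) :
    ∀ z ∈ U,
      Wronskian k
        (fun j => fun w => deriv (f j) w * G w + f j w * (-(deriv φ w / φ w) * G w)) z
      = (G z) ^ k * (φ z)⁻¹ * Wronskian (k + 1) (Fin.cons φ f) z := by
  intro z hz
  let q : Fin k → ℂ → ℂ := fun j w => f j w / φ w
  have hq : ∀ j, AnalyticAt ℂ (q j) z := fun j => (hf j z hz).div (hφ z hz) (hφzf z hz)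
  have hlhs : Wronskian k
      (fun j w => deriv (f j) w * G w + f j w * (-(deriv φ w / φ w) * G w)) z
      = Wronskian k (fun j w => (G w * φ w) * deriv (q j) w) z := by
    refine wronskian_congr fun j => eventually_of_mem (hUo.mem_nhds hz) fun w hw => ?_
    dsimp only
    rw [mul_assoc, ← deriv_sub_mul_deriv_div_eq_mul_deriv_div (hf j w hw).differentiableAt
      (hφ w hw).differentiableAt (hφzf w hw)]
    ring
  let Q : Fin (k + 1) → ℂ → ℂ := Fin.cons (fun _ => 1) q
  have hrhs : Wronskian (k + 1) (Fin.cons φ f) z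
      = Wronskian (k + 1) (fun j w => φ w * Q j w) z := by
    refine wronskian_congr fun j => eventually_of_mem (hUo.mem_nhds hz) fun w hw => ?_
    refine Fin.cases ?_ (fun i => ?_) j
    · simp [Q]
    · simp [Q, q, mul_div_cancel₀ _ (hφzf w hw)]
  have hQ : ∀ j, ContDiffAt ℂ (k + 1 : ℕ) (Q j) z :=
    Fin.cases (by simpa [Q] using contDiffAt_const) fun i => by simpa [Q] using (hq i).contDiffAt
  rw [hlhs, hrhs,
    wronskian_mul_left (u := fun w => G w * φ w) ((hG z hz).mul (hφ z hz)).contDiffAt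
      fun j => (hq j).deriv.contDiffAt,
    wronskian_mul_left (hφ z hz).contDiffAt hQ, wronskian_cons_one]
  field_simp [hφzf z hz]
  ring

/-- the Wronskian identity from the proof of Lemma 7.2, underlying
Frank's method: with `Ψ = −(φ'/φ)G`,
`W(f₁'G + f₁Ψ, …, f_k'G + f_kΨ) = G^k φ^{−1} W(φ, f₁, …, f_k)` on `U`. -/
theorem wronskian_identity_frank
    (k : ℕ) (hk : 1 ≤ k) (U : Set ℂ) (hUo : IsOpen U) (hUc : IsConnected U)
    (φ G : ℂ → ℂ) (f : Fin k → ℂ → ℂ)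
    (hφ : AnalyticOnNhd ℂ φ U) (hG : AnalyticOnNhd ℂ G U)
    (hf : ∀ j, AnalyticOnNhd ℂ (f j) U)
    (hφzf : ∀ z ∈ U, φ z ≠ 0) :
    ∀ z ∈ U,
      Wronskian k
        (fun j => fun w => deriv (f j) w * G w + f j w * (-(deriv φ w / φ w) * G w)) z
      = (G z) ^ k * (φ z)⁻¹ * Wronskian (k + 1) (Fin.cons φ f) z :=
  wronskian_identity_frank_general k U hUo φ G f hφ hG hf hφzf
end
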